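/- arXiv:1607.01162 — 6 statements merged into one kernel-verified Lean document; each statement's English description precedes it below -/
import Mathlib

section
/- Every nonempty graph G admitting a proper interval model has a partition of its vertex set into nonempty cliques K_1, …, K_t such that for every 1 < i < t every neighbor of a vertex of K_i lying outside K_i belongs to K_{i−1} ∪ K_{i+1}, every neighbor of a vertex of K_1 lying outside K_1 belongs to K_2, and every neighbor of a vertex of K_t lying outside K_t belongs to K_{t−1}. -/
section Aux

variable {V : Type*} [Fintype V] [Nonempty V]

/-- head of a finset: element with minimal `l`-value. -/
noncomputable def pihd (l : V → ℝ) (S : Finset V) : V :=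
  if h : S.Nonempty then (Finset.exists_min_image S l h).choose else Classical.arbitrary V

lemma pihd_mem (l : V → ℝ) {S : Finset V} (h : S.Nonempty) : pihd l S ∈ S := by
  rw [pihd, dif_pos h]
  exact (Finset.exists_min_image S l h).choose_spec.1

lemma pihd_min (l : V → ℝ) {S : Finset V} (h : S.Nonempty) {v : V} (hv : v ∈ S) :
    l (pihd l S) ≤ l v := by
  rw [pihd, dif_pos h]
  exact (Finset.exists_min_image S l h).choose_spec.2 v hv

open Classical in
/-- remaining vertices after peeling off `i` cliques. -/
noncomputable def pirem (l r : V → ℝ) : ℕ → Finset V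
  | 0 => Finset.univ
  | (i+1) => (pirem l r i).filter (fun v => r (pihd l (pirem l r i)) < l v)

open Classical in
lemma mem_pirem_succ (l r : V → ℝ) (i : ℕ) (v : V) :
    v ∈ pirem l r (i+1) ↔ v ∈ pirem l r i ∧ r (pihd l (pirem l r i)) < l v := by
  rw [pirem, Finset.mem_filter]

lemma pirem_succ_subset (l r : V → ℝ) (i : ℕ) : pirem l r (i+1) ⊆ pirem l r i :=
  fun v hv => ((mem_pirem_succ l r i v).1 hv).1

lemma pirem_antitone (l r : V → ℝ) : Antitone (pirem l r) :=
  antitone_nat_of_succ_le (pirem_succ_subset l r)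

end Aux

/-- Every nonempty (finite) graph `G` admitting a proper interval
model has a partition of its vertex set into nonempty cliques `K_1, …, K_t`
such that for every `1 < i < t` every neighbor of a vertex of `K_i` lying
outside `K_i` belongs to `K_{i-1} ∪ K_{i+1}`, every neighbor of a vertex of
`K_1` lying outside `K_1` belongs to `K_2`, and every neighbor of a vertex of
`K_t` lying outside `K_t` belongs to `K_{t-1}`. -/
theorem stmt_1 {V : Type*} [Fintype V] [Nonempty V] (G : SimpleGraph V)
    (l r : V → ℝ)
    (hlr : ∀ v : V, l v < r v)
    (hadj : ∀ u v : V, u ≠ v →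
      (G.Adj u v ↔ (Set.Icc (l u) (r u) ∩ Set.Icc (l v) (r v)).Nonempty))
    (hl_inj : Function.Injective l) (hr_inj : Function.Injective r)
    (hlr_ne : ∀ u v : V, l u ≠ r v)
    (hproper : ∀ u v : V, ¬ (l u < l v ∧ r v < r u)) :
    ∃ (t : ℕ) (K : ℕ → Set V),
      (∀ i, 1 ≤ i → i ≤ t → (K i).Nonempty ∧ G.IsClique (K i)) ∧
      (∀ v : V, ∃! i, 1 ≤ i ∧ i ≤ t ∧ v ∈ K i) ∧
      (∀ i, 1 < i → i < t → ∀ u ∈ K i, ∀ w : V, G.Adj u w → w ∉ K i →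
        w ∈ K (i - 1) ∪ K (i + 1)) ∧
      (∀ u ∈ K 1, ∀ w : V, G.Adj u w → w ∉ K 1 → w ∈ K 2) ∧
      (∀ u ∈ K t, ∀ w : V, G.Adj u w → w ∉ K t → w ∈ K (t - 1)) := by
  classical
  set S : ℕ → Finset V := pirem l r with hS
  -- r is monotone w.r.t. l
  have mono : ∀ u v : V, l u ≤ l v → r u ≤ r v := by
    intro u v h
    rcases eq_or_lt_of_le h with he | hlt
    · rw [hl_inj he]
    · by_contra hc
      exact hproper u v ⟨hlt, lt_of_not_ge hc⟩
  have adj_le : ∀ u v : V, G.Adj u v → l v ≤ r u := by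
    intro u v h
    obtain ⟨x, ⟨⟨_, hx2⟩, ⟨hx3, _⟩⟩⟩ := (hadj u v h.ne).1 h
    exact hx3.trans hx2
  have adj_of : ∀ u v : V, u ≠ v → l u ≤ l v → l v ≤ r u → G.Adj u v := by
    intro u v hne h1 h2
    exact (hadj u v hne).2 ⟨l v, ⟨h1, h2⟩, ⟨le_refl _, (hlr v).le⟩⟩
  -- termination
  have hterm : ∃ n, S n = ∅ := by
    have key : ∀ n, (S n).card + n ≤ Fintype.card V ∨ S n = ∅ := by
      intro n
      induction n with
      | zero => left; simpa using Finset.card_le_univ (S 0)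
      | succ n ih =>
        by_cases hne : (S n).Nonempty
        · rcases ih with ih | ih
          · left
            have hsub : S (n+1) ⊆ (S n).erase (pihd l (S n)) := by
              intro v hv
              rw [Finset.mem_erase]
              refine ⟨?_, ((mem_pirem_succ l r n v).1 hv).1⟩
              rintro rfl
              have := ((mem_pirem_succ l r n _).1 hv).2
              exact absurd ((hlr _).trans this) (lt_irrefl _)
            have h1 : (S (n+1)).card ≤ (S n).card - 1 := by
              calc (S (n+1)).card ≤ ((S n).erase (pihd l (S n))).card :=
                    Finset.card_le_card hsub
                _ = (S n).card - 1 := Finset.card_erase_of_mem (pihd_mem l hne)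
            have h2 : 1 ≤ (S n).card := Finset.card_pos.mpr hne
            omega
          · exact absurd ih (Finset.nonempty_iff_ne_empty.mp hne)
        · right
          rw [Finset.not_nonempty_iff_eq_empty] at hne
          exact Finset.subset_empty.mp (hne ▸ pirem_succ_subset l r n)
    rcases key (Fintype.card V + 1) with h | h
    · omega
    · exact ⟨_, h⟩
  set t := Nat.find hterm with ht_def
  have hSt : S t = ∅ := Nat.find_spec hterm
  have hSne : ∀ i, i < t → (S i).Nonempty :=
    fun i hi => Finset.nonempty_iff_ne_empty.mpr (Nat.find_min hterm hi)
  have htpos : 1 ≤ t := by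
    rcases Nat.eq_zero_or_pos t with h | h
    · exfalso
      have : S 0 = ∅ := h ▸ hSt
      exact absurd this (Finset.univ_nonempty).ne_empty
    · exact h
  have levex : ∀ v : V, ∃ i, v ∉ S i := fun v => ⟨t, by simp [hSt]⟩
  set lev : V → ℕ := fun v => Nat.find (levex v) with hlev_def
  have mem_iff : ∀ v i, v ∈ S i ↔ i < lev v := by
    intro v i
    constructor
    · intro h
      by_contra hc
      push_neg at hc
      exact Nat.find_spec (levex v) (pirem_antitone l r hc h)
    · intro h
      exact not_not.mp (Nat.find_min (levex v) h)
  have lev_pos : ∀ v, 1 ≤ lev v := fun v =>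
    (mem_iff v 0).1 (Finset.mem_univ v)
  have lev_le : ∀ v, lev v ≤ t := fun v => Nat.find_le (by simp [hSt])
  -- members of level a+1
  have lev_memS : ∀ v, v ∈ S (lev v - 1) := by
    intro v
    exact (mem_iff v _).2 (by have := lev_pos v; omega)
  have lev_ub : ∀ v, l v ≤ r (pihd l (S (lev v - 1))) := by
    intro v
    have hnot : v ∉ S (lev v) := Nat.find_spec (levex v)
    have heq : lev v = (lev v - 1) + 1 := by have := lev_pos v; omega
    rw [heq, hS] at hnot
    by_contra hc
    exact hnot ((mem_pirem_succ l r _ v).2 ⟨lev_memS v, lt_of_not_ge hc⟩)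
  -- key gap lemma
  have gap : ∀ u w : V, lev u + 2 ≤ lev w → ¬ G.Adj u w := by
    intro u w hgap hadj'
    set a := lev u - 1 with ha
    set b := lev w - 2 with hb
    have hau : lev u = a + 1 := by have := lev_pos u; omega
    have hbw : b + 2 ≤ lev w := by have := lev_pos w; omega
    -- w ∈ S (b+1), so r (hd b) < l w
    have hw1 : w ∈ S (b + 1) := (mem_iff w _).2 (by omega)
    have hw2 : r (pihd l (S b)) < l w := ((mem_pirem_succ l r b w).1 hw1).2
    -- hd b ∈ S b and b ≥ lev u, so hd b ∈ S (a+1) hence r (hd a) < l (hd b)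
    have hbt : b < t := by have := lev_le w; omega
    have hdb_mem : pihd l (S b) ∈ S b := pihd_mem l (hSne b hbt)
    have hdb_mem' : pihd l (S b) ∈ S (a + 1) :=
      pirem_antitone l r (by omega : a + 1 ≤ b) hdb_mem
    have h3 : r (pihd l (S a)) < l (pihd l (S b)) :=
      ((mem_pirem_succ l r a _).1 hdb_mem').2
    have h4 : l u ≤ r (pihd l (S a)) := by
      have := lev_ub u; rwa [← ha] at this
    have h5 : r u ≤ r (pihd l (S b)) := mono _ _ (le_of_lt (lt_of_le_of_lt h4 h3))
    have h6 : l w ≤ r u := adj_le u w hadj'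
    linarith
  refine ⟨t, fun i => {v : V | lev v = i}, ?_, ?_, ?_, ?_, ?_⟩
  · -- nonempty cliques
    intro i h1 h2
    constructor
    · refine ⟨pihd l (S (i-1)), ?_⟩
      have hit : i - 1 < t := by omega
      have hmem : pihd l (S (i-1)) ∈ S (i-1) := pihd_mem l (hSne _ hit)
      have h3 : i - 1 < lev (pihd l (S (i-1))) := (mem_iff _ _).1 hmem
      have h4 : pihd l (S (i-1)) ∉ S i := by
        have heq : i = (i - 1) + 1 := by omega
        rw [heq, hS]
        intro hc
        have := ((mem_pirem_succ l r _ _).1 hc).2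
        exact absurd ((hlr _).trans this) (lt_irrefl _)
      have h5 : ¬ (i < lev (pihd l (S (i-1)))) := fun hc => h4 ((mem_iff _ _).2 hc)
      show lev _ = i
      omega
    · intro u hu v hv huv
      have hu' : lev u = i := hu
      have hv' : lev v = i := hv
      -- wlog l u ≤ l v
      have main : ∀ x y : V, x ≠ y → lev x = i → lev y = i → l x ≤ l y → G.Adj x y := by
        intro x y hne hx hy hle
        have hxm : x ∈ S (i - 1) := hx ▸ lev_memS x
        have hhd : l (pihd l (S (i-1))) ≤ l x := pihd_min l (hSne _ (by omega)) hxm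
        have h1' : l y ≤ r (pihd l (S (i-1))) := by have := lev_ub y; rwa [hy] at this
        exact adj_of x y hne hle (h1'.trans (mono _ _ hhd))
      rcases le_total (l u) (l v) with h | h
      · exact main u v huv hu' hv' h
      · exact (main v u (Ne.symm huv) hv' hu' h).symm
  · -- unique index
    intro v
    refine ⟨lev v, ⟨lev_pos v, lev_le v, rfl⟩, ?_⟩
    rintro i ⟨-, -, hi⟩
    exact (hi : lev v = i).symm
  · -- middle cliques
    intro i h1 h2 u hu w hw hwne
    have hu' : lev u = i := hu
    have hj1 : ¬ (lev u + 2 ≤ lev w) := fun hc => gap u w hc hw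
    have hj2 : ¬ (lev w + 2 ≤ lev u) := fun hc => gap w u hc hw.symm
    have hne : lev w ≠ i := fun hc => hwne hc
    have : lev w = i - 1 ∨ lev w = i + 1 := by
      have := lev_pos w; omega
    rcases this with h | h
    · exact Or.inl h
    · exact Or.inr h
  · -- first clique
    intro u hu w hw hwne
    have hu' : lev u = 1 := hu
    have hj1 : ¬ (lev u + 2 ≤ lev w) := fun hc => gap u w hc hw
    have hne : lev w ≠ 1 := fun hc => hwne hc
    show lev w = 2
    have := lev_pos w; omega
  · -- last clique
    intro u hu w hw hwne
    have hu' : lev u = t := hu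
    have hj2 : ¬ (lev w + 2 ≤ lev u) := fun hc => gap w u hc hw.symm
    have hne : lev w ≠ t := fun hc => hwne hc
    show lev w = t - 1
    have h1 := lev_le w
    omega
end

section
/- Let G be a graph with a proper interval model, and let K_1, …, K_t be a partition of V(G) into nonempty cliques such that each K_j consists of consecutive vertices in the ordering of the model by left endpoints and such that for every 1 ≤ j ≤ t every neighbor of a vertex of K_j lies in K_{j−1} ∪ K_j ∪ K_{j+1} (with K_0 = K_{t+1} = ∅). Then for each 1 < i < t, the graph G' obtained from G by contracting K_i again admits a proper interval model. -/
/-- A graph has a proper interval model: closed intervals `[l v, r v]` with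
`l v < r v`, adjacency of distinct vertices iff intervals intersect, all
endpoints pairwise distinct, and no interval properly contains another. -/
def HasProperIntervalModel {W : Type*} (G : SimpleGraph W) : Prop :=
  ∃ l r : W → ℝ,
    (∀ v : W, l v < r v) ∧
    (∀ u v : W, u ≠ v →
      (G.Adj u v ↔ (Set.Icc (l u) (r u) ∩ Set.Icc (l v) (r v)).Nonempty)) ∧
    Function.Injective l ∧ Function.Injective r ∧
    (∀ u v : W, l u ≠ r v) ∧
    (∀ u v : W, ¬ (l u < l v ∧ r v < r u))

lemma icc_inter_nonempty {a b c d : ℝ} (hab : a < b) (hcd : c < d) :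
    (Set.Icc a b ∩ Set.Icc c d).Nonempty ↔ c ≤ b ∧ a ≤ d := by
  rw [Set.Icc_inter_Icc, Set.nonempty_Icc, sup_le_iff, le_inf_iff, le_inf_iff]
  constructor
  · rintro ⟨⟨_, h1⟩, ⟨h2, _⟩⟩; exact ⟨h2, h1⟩
  · rintro ⟨h1, h2⟩; exact ⟨⟨hab.le, h2⟩, ⟨h1, hcd.le⟩⟩

lemma order_lemma {V : Type*} (l r : V → ℝ) (hr_inj : Function.Injective r)
    (hproper : ∀ u v : V, ¬ (l u < l v ∧ r v < r u)) {u v : V} (h : l u < l v) :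
    r u < r v := by
  rcases lt_trichotomy (r u) (r v) with h' | h' | h'
  · exact h'
  · exfalso; have := hr_inj h'; rw [this] at h; exact lt_irrefl _ h
  · exact absurd ⟨h, h'⟩ (hproper u v)

lemma adj_iff_lemma {V : Type*} (G : SimpleGraph V) (l r : V → ℝ)
    (hlr : ∀ v : V, l v < r v)
    (hadj : ∀ u v : V, u ≠ v →
      (G.Adj u v ↔ (Set.Icc (l u) (r u) ∩ Set.Icc (l v) (r v)).Nonempty))
    (hlr_ne : ∀ u v : V, l u ≠ r v)
    {u v : V} (h : l u < l v) : G.Adj u v ↔ l v < r u := by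
  have hne : u ≠ v := by rintro rfl; exact lt_irrefl _ h
  rw [hadj u v hne, icc_inter_nonempty (hlr u) (hlr v)]
  constructor
  · rintro ⟨h1, _⟩; exact lt_of_le_of_ne h1 (hlr_ne v u)
  · intro h1; exact ⟨h1.le, le_of_lt (h.trans (hlr v))⟩

set_option maxHeartbeats 1000000 in
theorem aux_contract {V : Type*} (G : SimpleGraph V) (l r : V → ℝ)
    (hlr : ∀ v : V, l v < r v)
    (hadj : ∀ u v : V, u ≠ v →
      (G.Adj u v ↔ (Set.Icc (l u) (r u) ∩ Set.Icc (l v) (r v)).Nonempty))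
    (hl_inj : Function.Injective l) (hr_inj : Function.Injective r)
    (hlr_ne : ∀ u v : V, l u ≠ r v)
    (hproper : ∀ u v : V, ¬ (l u < l v ∧ r v < r u))
    (t : ℕ) (K : ℕ → Set V)
    (hne : ∀ j, 1 ≤ j → j ≤ t → (K j).Nonempty)
    (hclique : ∀ j, 1 ≤ j → j ≤ t → G.IsClique (K j))
    (hpart : ∀ v : V, ∃! j, 1 ≤ j ∧ j ≤ t ∧ v ∈ K j)
    (hloc : ∀ j, 1 ≤ j → j ≤ t → ∀ a ∈ K j, ∀ w : V, G.Adj a w →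
      w ∈ K (j - 1) ∪ K j ∪ K (j + 1))
    (i : ℕ) (h1i : 1 < i) (hit : i < t)
    (hord1 : ∀ a ∈ K (i - 1), ∀ y ∈ K i, l a < l y)
    (hord2 : ∀ y ∈ K i, ∀ b ∈ K (i + 1), l y < l b) :
    HasProperIntervalModel
      (SimpleGraph.fromRel (fun a b : {x : V // x ∉ K i} =>
        G.Adj a.1 b.1 ∨
        ((a.1 ∈ K (i - 1) ∧ ∃ y ∈ K i, G.Adj a.1 y) ∧
         (b.1 ∈ K (i + 1) ∧ ∃ y ∈ K i, G.Adj b.1 y)))) := by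
  classical
  obtain ⟨y0, hy0⟩ := hne i (by omega) (by omega)
  obtain ⟨a0, ha0⟩ := hne (i - 1) (by omega) (by omega)
  obtain ⟨b0, hb0⟩ := hne (i + 1) (by omega) (by omega)
  have hOL : ∀ u v : V, l u < l v → r u < r v :=
    fun u v h => order_lemma l r hr_inj hproper h
  have hADJ : ∀ u v : V, l u < l v → (G.Adj u v ↔ l v < r u) :=
    fun u v h => adj_iff_lemma G l r hlr hadj hlr_ne h
  obtain ⟨Li, hLidef⟩ : ∃ x : ℝ, x = sInf (l '' K i) := ⟨_, rfl⟩
  obtain ⟨Ri, hRidef⟩ : ∃ x : ℝ, x = sSup (r '' K i) := ⟨_, rfl⟩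
  obtain ⟨Mi, hMidef⟩ : ∃ x : ℝ, x = (Li + Ri) / 2 := ⟨_, rfl⟩
  have hbddb : BddBelow (l '' K i) :=
    ⟨l a0, by rintro x ⟨y, hy, rfl⟩; exact (hord1 a0 ha0 y hy).le⟩
  have hbdda : BddAbove (r '' K i) :=
    ⟨r b0, by rintro x ⟨y, hy, rfl⟩; exact (hOL y b0 (hord2 y hy b0 hb0)).le⟩
  have himgl : (l '' K i).Nonempty := ⟨l y0, y0, hy0, rfl⟩
  have himgr : (r '' K i).Nonempty := ⟨r y0, y0, hy0, rfl⟩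
  have hLile : ∀ y ∈ K i, Li ≤ l y := by
    intro y hy; rw [hLidef]; exact csInf_le hbddb ⟨y, hy, rfl⟩
  have hRige : ∀ y ∈ K i, r y ≤ Ri := by
    intro y hy; rw [hRidef]; exact le_csSup hbdda ⟨y, hy, rfl⟩
  have hLR : Li < Ri :=
    lt_of_le_of_lt (hLile y0 hy0) (lt_of_lt_of_le (hlr y0) (hRige y0 hy0))
  have hLM : Li < Mi := by rw [hMidef]; linarith
  have hMR : Mi < Ri := by rw [hMidef]; linarith
  obtain ⟨Ap, hApdef⟩ :
      ∃ P : V → Prop, ∀ w, P w ↔ (w ∈ K (i - 1) ∧ ∃ y ∈ K i, G.Adj w y) :=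
    ⟨_, fun w => Iff.rfl⟩
  obtain ⟨Bp, hBpdef⟩ :
      ∃ P : V → Prop, ∀ w, P w ↔ (w ∈ K (i + 1) ∧ ∃ y ∈ K i, G.Adj w y) :=
    ⟨_, fun w => Iff.rfl⟩
  -- zone facts
  have hZm_l : ∀ w ∈ K (i - 1), l w ≤ Li := by
    intro w hw; rw [hLidef]
    exact le_csInf himgl (by rintro x ⟨y, hy, rfl⟩; exact (hord1 w hw y hy).le)
  have hZm_r : ∀ w ∈ K (i - 1), r w < Ri := fun w hw =>
    lt_of_lt_of_le (hOL w y0 (hord1 w hw y0 hy0)) (hRige y0 hy0)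
  have hZp_l : ∀ w ∈ K (i + 1), Li < l w := fun w hw =>
    lt_of_le_of_lt (hLile y0 hy0) (hord2 y0 hy0 w hw)
  have hZp_r : ∀ w ∈ K (i + 1), Ri ≤ r w := by
    intro w hw; rw [hRidef]
    exact csSup_le himgr
      (by rintro x ⟨y, hy, rfl⟩; exact (hOL y w (hord2 y hy w hw)).le)
  have hZAc : ∀ w ∈ K (i - 1), ((∃ y ∈ K i, G.Adj w y) ↔ Li < r w) := by
    intro w hw
    constructor
    · rintro ⟨y, hy, hA⟩
      exact lt_of_le_of_lt (hLile y hy) ((hADJ w y (hord1 w hw y hy)).mp hA)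
    · intro h
      rw [hLidef] at h
      obtain ⟨x, hx, hlt⟩ := exists_lt_of_csInf_lt himgl h
      obtain ⟨y, hy, rfl⟩ := hx
      exact ⟨y, hy, (hADJ w y (hord1 w hw y hy)).mpr hlt⟩
  have hZBc : ∀ w ∈ K (i + 1), ((∃ y ∈ K i, G.Adj w y) ↔ l w < Ri) := by
    intro w hw
    constructor
    · rintro ⟨y, hy, hA⟩
      exact lt_of_lt_of_le ((hADJ y w (hord2 y hy w hw)).mp hA.symm) (hRige y hy)
    · intro h
      rw [hRidef] at h
      obtain ⟨x, hx, hlt⟩ := exists_lt_of_lt_csSup himgr h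
      obtain ⟨y, hy, rfl⟩ := hx
      exact ⟨y, hy, ((hADJ y w (hord2 y hy w hw)).mpr hlt).symm⟩
  have hcliq : ∀ y ∈ K i, ∀ y' ∈ K i, l y ≤ r y' := by
    intro y hy y' hy'
    rcases eq_or_ne y y' with rfl | hne'
    · exact (hlr y).le
    · have := (hadj y y' hne').mp (hclique i (by omega) (by omega) hy hy' hne')
      rw [icc_inter_nonempty (hlr y) (hlr y')] at this
      exact this.2
  have hZout : ∀ w, w ∉ K (i - 1) → w ∉ K i → w ∉ K (i + 1) →
      r w ≤ Li ∨ Ri ≤ l w := by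
    intro w h1 h2 h3
    have hnadj : ∀ y ∈ K i, ¬ G.Adj w y := by
      intro y hy hA
      have := hloc i (by omega) (by omega) y hy w hA.symm
      simp only [Set.mem_union] at this
      tauto
    have hkey : ∀ y ∈ K i, r w < l y ∨ r y < l w := by
      intro y hy
      have hne' : w ≠ y := fun h => h2 (h ▸ hy)
      have hno : ¬ (l y ≤ r w ∧ l w ≤ r y) := by
        rw [← icc_inter_nonempty (hlr w) (hlr y), ← hadj w y hne']
        exact hnadj y hy
      by_contra hc
      push_neg at hc
      exact hno ⟨by linarith [hc.1], by linarith [hc.2]⟩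
    rcases hkey y0 hy0 with h | h
    · left
      rw [hLidef]
      refine le_csInf himgl ?_
      rintro x ⟨y, hy, rfl⟩
      by_contra hxy
      push_neg at hxy
      rcases hkey y hy with h' | h'
      · linarith
      · linarith [hcliq y0 hy0 y hy, (hlr w).le]
    · right
      rw [hRidef]
      refine csSup_le himgr ?_
      rintro x ⟨y, hy, rfl⟩
      by_contra hxy
      push_neg at hxy
      rcases hkey y hy with h' | h'
      · linarith [hcliq y hy y0 hy0, (hlr w).le]
      · linarith
  have hABdisj : ∀ w : V, w ∈ K (i - 1) → w ∈ K (i + 1) → False := by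
    intro w h1 h2
    obtain ⟨j, _, hu⟩ := hpart w
    have e1 := hu (i - 1) ⟨by omega, by omega, h1⟩
    have e2 := hu (i + 1) ⟨by omega, by omega, h2⟩
    omega
  obtain ⟨l', hl'val, hl'n⟩ : ∃ f : V → ℝ,
      (∀ w, Bp w → f w = (l w + Li) / 2) ∧ (∀ w, ¬ Bp w → f w = l w) :=
    ⟨fun w => if Bp w then (l w + Li) / 2 else l w,
      fun w hw => if_pos hw, fun w hw => if_neg hw⟩
  obtain ⟨r', hr'val, hr'n⟩ : ∃ f : V → ℝ,
      (∀ w, Ap w → f w = (r w + Ri) / 2) ∧ (∀ w, ¬ Ap w → f w = r w) :=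
    ⟨fun w => if Ap w then (r w + Ri) / 2 else r w,
      fun w hw => if_pos hw, fun w hw => if_neg hw⟩
  have hApz : ∀ w, Ap w → l w ≤ Li ∧ Li < r w ∧ r w < Ri := by
    intro w hw
    obtain ⟨h1, h2⟩ := (hApdef w).mp hw
    exact ⟨hZm_l w h1, (hZAc w h1).mp h2, hZm_r w h1⟩
  have hBpz : ∀ w, Bp w → Li < l w ∧ l w < Ri ∧ Ri ≤ r w := by
    intro w hw
    obtain ⟨h1, h2⟩ := (hBpdef w).mp hw
    exact ⟨hZp_l w h1, (hZBc w h1).mp h2, hZp_r w h1⟩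
  have hl'B : ∀ w, Bp w → Li < l' w ∧ l' w < Mi := by
    intro w hw
    obtain ⟨h1, h2, _⟩ := hBpz w hw
    rw [hl'val w hw, hMidef]
    constructor <;> linarith
  have hr'A : ∀ w, Ap w → Mi < r' w ∧ r' w < Ri := by
    intro w hw
    obtain ⟨_, h1, h2⟩ := hApz w hw
    rw [hr'val w hw, hMidef]
    constructor <;> linarith
  have hApB : ∀ w, Ap w → ¬ Bp w := fun w ha hb =>
    hABdisj w ((hApdef w).mp ha).1 ((hBpdef w).mp hb).1
  have hlcls : ∀ w, w ∉ K i → ¬ Bp w → l w ≤ Li ∨ Ri ≤ l w := by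
    intro w hw hb
    by_cases h1 : w ∈ K (i - 1)
    · exact Or.inl (hZm_l w h1)
    by_cases h2 : w ∈ K (i + 1)
    · right; by_contra hc; push_neg at hc
      exact hb ((hBpdef w).mpr ⟨h2, (hZBc w h2).mpr hc⟩)
    · rcases hZout w h1 hw h2 with h | h
      · exact Or.inl ((hlr w).le.trans h)
      · exact Or.inr h
  have hrcls : ∀ w, w ∉ K i → ¬ Ap w → r w ≤ Li ∨ Ri ≤ r w := by
    intro w hw ha
    by_cases h1 : w ∈ K (i - 1)
    · left; by_contra hc; push_neg at hc
      exact ha ((hApdef w).mpr ⟨h1, (hZAc w h1).mpr hc⟩)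
    by_cases h2 : w ∈ K (i + 1)
    · exact Or.inr (hZp_r w h2)
    · rcases hZout w h1 hw h2 with h | h
      · exact Or.inl h
      · exact Or.inr (h.trans (hlr w).le)
  have hcls : ∀ w, w ∉ K i → ¬ Ap w → ¬ Bp w → r w ≤ Li ∨ Ri ≤ l w := by
    intro w hw ha hb
    by_cases h1 : w ∈ K (i - 1)
    · left; by_contra hc; push_neg at hc
      exact ha ((hApdef w).mpr ⟨h1, (hZAc w h1).mpr hc⟩)
    by_cases h2 : w ∈ K (i + 1)
    · right; by_contra hc; push_neg at hc
      exact hb ((hBpdef w).mpr ⟨h2, (hZBc w h2).mpr hc⟩)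
    · exact hZout w h1 hw h2
  have hl'mono : ∀ u v : V, u ∉ K i → v ∉ K i → l u < l v → l' u < l' v := by
    intro u v hu hv h
    by_cases bu : Bp u <;> by_cases bv : Bp v
    · rw [hl'val u bu, hl'val v bv]; linarith
    · rw [hl'n v bv]
      rcases hlcls v hv bv with h' | h'
      · exfalso; have := (hBpz u bu).1; linarith
      · have := (hl'B u bu).2; linarith
    · rw [hl'n u bu]
      rcases hlcls u hu bu with h' | h'
      · have := (hl'B v bv).1; linarith
      · exfalso; have := (hBpz v bv).2.1; linarith
    · rw [hl'n u bu, hl'n v bv]; exact h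
  have hr'mono : ∀ u v : V, u ∉ K i → v ∉ K i → r u < r v → r' u < r' v := by
    intro u v hu hv h
    by_cases au : Ap u <;> by_cases av : Ap v
    · rw [hr'val u au, hr'val v av]; linarith
    · rw [hr'n v av]
      rcases hrcls v hv av with h' | h'
      · exfalso; have := (hApz u au).2.1; linarith
      · have := (hr'A u au).2; linarith
    · rw [hr'n u au]
      rcases hrcls u hu au with h' | h'
      · have := (hr'A v av).1; linarith
      · exfalso; have := (hApz v av).2.2; linarith
    · rw [hr'n u au, hr'n v av]; exact h
  have hlr' : ∀ v : V, v ∉ K i → l' v < r' v := by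
    intro v hv
    by_cases av : Ap v
    · rw [hl'n v (hApB v av)]
      have h1 := (hApz v av).1
      have h2 := (hr'A v av).1
      linarith
    by_cases bv : Bp v
    · rw [hr'n v av]
      have h1 := (hl'B v bv).2
      have h2 := (hBpz v bv).2.2
      linarith
    · rw [hl'n v bv, hr'n v av]; exact hlr v
  have hner : ∀ u v : V, u ∉ K i → v ∉ K i → l' u ≠ r' v := by
    intro u v hu hv
    by_cases bu : Bp u <;> by_cases av : Ap v
    · have h1 := (hl'B u bu).2
      have h2 := (hr'A v av).1
      exact ne_of_lt (by linarith)
    · rw [hr'n v av]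
      have h1 := hl'B u bu
      rcases hrcls v hv av with h | h
      · exact ne_of_gt (by linarith)
      · exact ne_of_lt (by linarith)
    · rw [hl'n u bu]
      have h2 := hr'A v av
      rcases hlcls u hu bu with h | h
      · exact ne_of_lt (by linarith)
      · exact ne_of_gt (by linarith)
    · rw [hl'n u bu, hr'n v av]; exact hlr_ne u v
  have hcore : ∀ u v : V, u ∉ K i → v ∉ K i → l u < l v →
      ((l' v < r' u) ↔ (l v < r u ∨ (Ap u ∧ Bp v))) := by
    intro u v hu hv h
    by_cases au : Ap u
    · have hu1 := hApz u au
      have hu2 := hr'A u au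
      by_cases bv : Bp v
      · exact iff_of_true (by have := (hl'B v bv).2; linarith) (Or.inr ⟨au, bv⟩)
      · rw [hl'n v bv]
        rcases hlcls v hv bv with h' | h'
        · exact iff_of_true (by linarith) (Or.inl (by linarith))
        · apply iff_of_false
          · exact not_lt.mpr (by linarith)
          · rintro (h'' | ⟨_, hb⟩)
            · linarith
            · exact bv hb
    · rw [hr'n u au]
      by_cases bu : Bp u
      · have hu1 := hBpz u bu
        by_cases bv : Bp v
        · have hv1 := hBpz v bv
          exact iff_of_true (by have := (hl'B v bv).2; linarith)
            (Or.inl (by linarith))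
        · rw [hl'n v bv]
          rcases hlcls v hv bv with h' | h'
          · exfalso; linarith
          · exact ⟨Or.inl, fun hh => hh.elim id (fun hh' => absurd hh'.1 au)⟩
      · rcases hcls u hu au bu with h' | h'
        · by_cases bv : Bp v
          · apply iff_of_false
            · have := (hl'B v bv).1; exact not_lt.mpr (by linarith)
            · rintro (h'' | ⟨ha, _⟩)
              · have := (hBpz v bv).1; linarith
              · exact au ha
          · rw [hl'n v bv]
            exact ⟨Or.inl, fun hh => hh.elim id (fun hh' => absurd hh'.1 au)⟩
        · have bv : ¬ Bp v := fun hb => by have := (hBpz v hb).2.1; linarith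
          rw [hl'n v bv]
          exact ⟨Or.inl, fun hh => hh.elim id (fun hh' => absurd hh'.1 au)⟩
  -- the model
  unfold HasProperIntervalModel
  refine ⟨fun v => l' v.1, fun v => r' v.1, fun v => hlr' v.1 v.2, ?_, ?_, ?_,
    fun u v => hner u.1 v.1 u.2 v.2, ?_⟩
  · -- adjacency
    have key : ∀ u v : {x : V // x ∉ K i}, l u.1 < l v.1 →
        (((G.Adj u.1 v.1 ∨ (Ap u.1 ∧ Bp v.1)) ∨ (G.Adj v.1 u.1 ∨ (Ap v.1 ∧ Bp u.1))) ↔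
          (Set.Icc (l' u.1) (r' u.1) ∩ Set.Icc (l' v.1) (r' v.1)).Nonempty) := by
      intro u v h
      rw [icc_inter_nonempty (hlr' u.1 u.2) (hlr' v.1 v.2)]
      have h2 : l' u.1 ≤ r' v.1 :=
        le_of_lt (lt_trans (hl'mono u.1 v.1 u.2 v.2 h) (hlr' v.1 v.2))
      rw [and_iff_left h2]
      have h3 : (l' v.1 ≤ r' u.1) ↔ (l' v.1 < r' u.1) :=
        ⟨fun hh => lt_of_le_of_ne hh (hner v.1 u.1 v.2 u.2), le_of_lt⟩
      rw [h3, hcore u.1 v.1 u.2 v.2 h]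
      have hA1 : G.Adj u.1 v.1 ↔ l v.1 < r u.1 := hADJ u.1 v.1 h
      have hA2 : G.Adj v.1 u.1 ↔ l v.1 < r u.1 :=
        ⟨fun hh => hA1.mp hh.symm, fun hh => (hA1.mpr hh).symm⟩
      have hvb : Ap v.1 ∧ Bp u.1 → False := by
        rintro ⟨hav, hbu⟩
        have h1 := hZm_l v.1 ((hApdef v.1).mp hav).1
        have h2 := (hBpz u.1 hbu).1
        linarith
      rw [hA1, hA2]
      tauto
    simp only [hApdef, hBpdef] at key
    intro u v huv
    show _ ↔ (Set.Icc (l' u.1) (r' u.1) ∩ Set.Icc (l' v.1) (r' v.1)).Nonempty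
    rw [SimpleGraph.fromRel_adj, and_iff_right huv]
    rcases lt_trichotomy (l u.1) (l v.1) with h | h | h
    · exact key u v h
    · exact absurd (Subtype.ext (hl_inj h)) huv
    · rw [Set.inter_comm]
      exact or_comm.trans (key v u h)
  · -- l' injective
    intro u v h
    rcases lt_trichotomy (l u.1) (l v.1) with h' | h' | h'
    · exact absurd h (ne_of_lt (hl'mono u.1 v.1 u.2 v.2 h'))
    · exact Subtype.ext (hl_inj h')
    · exact absurd h.symm (ne_of_lt (hl'mono v.1 u.1 v.2 u.2 h'))
  · -- r' injective
    intro u v h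
    rcases lt_trichotomy (r u.1) (r v.1) with h' | h' | h'
    · exact absurd h (ne_of_lt (hr'mono u.1 v.1 u.2 v.2 h'))
    · exact Subtype.ext (hr_inj h')
    · exact absurd h.symm (ne_of_lt (hr'mono v.1 u.1 v.2 u.2 h'))
  · -- proper
    intro u v hc
    obtain ⟨h1, h2⟩ := hc
    have hl : l u.1 < l v.1 := by
      rcases lt_trichotomy (l u.1) (l v.1) with h | h | h
      · exact h
      · exfalso; have he := hl_inj h
        have h1' : l' u.1 < l' v.1 := h1
        rw [he] at h1'; exact lt_irrefl _ h1'
      · exact absurd (hl'mono v.1 u.1 v.2 u.2 h) (not_lt.mpr h1.le)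
    have hr : r v.1 < r u.1 := by
      rcases lt_trichotomy (r v.1) (r u.1) with h | h | h
      · exact h
      · exfalso; have he := hr_inj h
        have h2' : r' v.1 < r' u.1 := h2
        rw [he] at h2'; exact lt_irrefl _ h2'
      · exact absurd (hr'mono u.1 v.1 u.2 v.2 h) (not_lt.mpr h2.le)
    exact hproper u.1 v.1 ⟨hl, hr⟩

set_option maxHeartbeats 1000000 in

set_option maxHeartbeats 1000000

/-- Let `G` have a proper interval model, and let `K_1, …, K_t`
be a partition of `V(G)` into nonempty cliques, each consisting of consecutive
vertices in the ordering by left endpoints, such that every neighbor of a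
vertex of `K_j` lies in `K_{j-1} ∪ K_j ∪ K_{j+1}` (with `K_0 = K_{t+1} = ∅`).
Then for `1 < i < t`, the graph obtained by contracting `K_i` (deleting `K_i`
and joining every vertex of `N(K_i) ∩ K_{i-1}` to every vertex of
`N(K_i) ∩ K_{i+1}`) again admits a proper interval model. -/
theorem stmt_3 {V : Type*} (G : SimpleGraph V) (l r : V → ℝ)
    (hlr : ∀ v : V, l v < r v)
    (hadj : ∀ u v : V, u ≠ v →
      (G.Adj u v ↔ (Set.Icc (l u) (r u) ∩ Set.Icc (l v) (r v)).Nonempty))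
    (hl_inj : Function.Injective l) (hr_inj : Function.Injective r)
    (hlr_ne : ∀ u v : V, l u ≠ r v)
    (hproper : ∀ u v : V, ¬ (l u < l v ∧ r v < r u))
    (t : ℕ) (K : ℕ → Set V)
    (hK0 : K 0 = ∅) (hKt1 : K (t + 1) = ∅)
    (hne : ∀ j, 1 ≤ j → j ≤ t → (K j).Nonempty)
    (hclique : ∀ j, 1 ≤ j → j ≤ t → G.IsClique (K j))
    (hpart : ∀ v : V, ∃! j, 1 ≤ j ∧ j ≤ t ∧ v ∈ K j)
    (hconsec : ∀ j, 1 ≤ j → j ≤ t → ∀ a ∈ K j, ∀ b ∈ K j, ∀ x : V,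
      l a ≤ l x → l x ≤ l b → x ∈ K j)
    (hloc : ∀ j, 1 ≤ j → j ≤ t → ∀ a ∈ K j, ∀ w : V, G.Adj a w →
      w ∈ K (j - 1) ∪ K j ∪ K (j + 1))
    (i : ℕ) (h1i : 1 < i) (hit : i < t) :
    HasProperIntervalModel
      (SimpleGraph.fromRel (fun a b : {x : V // x ∉ K i} =>
        G.Adj a.1 b.1 ∨
        ((a.1 ∈ K (i - 1) ∧ ∃ y ∈ K i, G.Adj a.1 y) ∧
         (b.1 ∈ K (i + 1) ∧ ∃ y ∈ K i, G.Adj b.1 y)))) := by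
  classical
  have hOL : ∀ u v : V, l u < l v → r u < r v :=
    fun u v h => order_lemma l r hr_inj hproper h
  have hADJ : ∀ u v : V, l u < l v → (G.Adj u v ↔ l v < r u) :=
    fun u v h => adj_iff_lemma G l r hlr hadj hlr_ne h
  have huniq : ∀ w : V, ∀ j j' : ℕ, 1 ≤ j → j ≤ t → 1 ≤ j' → j' ≤ t →
      w ∈ K j → w ∈ K j' → j = j' := by
    intro w j j' h1 h2 h3 h4 hj hj'
    obtain ⟨c, _, hu⟩ := hpart w
    have e1 := hu j ⟨h1, h2, hj⟩
    have e2 := hu j' ⟨h3, h4, hj'⟩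
    omega
  by_cases hA : ∃ a, a ∈ K (i - 1) ∧ ∃ y ∈ K i, G.Adj a y
  case neg =>
    unfold HasProperIntervalModel
    refine ⟨fun v => l v.1, fun v => r v.1, fun v => hlr v.1, ?_, ?_, ?_,
      fun u v => hlr_ne u.1 v.1, fun u v => hproper u.1 v.1⟩
    · intro u v huv
      have h1 : u.1 ≠ v.1 := fun e => huv (Subtype.ext e)
      rw [SimpleGraph.fromRel_adj]
      constructor
      · rintro ⟨_, ((h | ⟨ha, hb⟩) | (h | ⟨ha, hb⟩))⟩
        · exact (hadj u.1 v.1 h1).mp h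
        · exact absurd ⟨u.1, ha⟩ hA
        · exact (hadj u.1 v.1 h1).mp h.symm
        · exact absurd ⟨v.1, ha⟩ hA
      · intro h
        exact ⟨huv, Or.inl (Or.inl ((hadj u.1 v.1 h1).mpr h))⟩
    · intro u v h
      exact Subtype.ext (hl_inj h)
    · intro u v h
      exact Subtype.ext (hr_inj h)
  by_cases hB : ∃ b, b ∈ K (i + 1) ∧ ∃ y ∈ K i, G.Adj b y
  case neg =>
    unfold HasProperIntervalModel
    refine ⟨fun v => l v.1, fun v => r v.1, fun v => hlr v.1, ?_, ?_, ?_,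
      fun u v => hlr_ne u.1 v.1, fun u v => hproper u.1 v.1⟩
    · intro u v huv
      have h1 : u.1 ≠ v.1 := fun e => huv (Subtype.ext e)
      rw [SimpleGraph.fromRel_adj]
      constructor
      · rintro ⟨_, ((h | ⟨ha, hb⟩) | (h | ⟨ha, hb⟩))⟩
        · exact (hadj u.1 v.1 h1).mp h
        · exact absurd ⟨v.1, hb⟩ hB
        · exact (hadj u.1 v.1 h1).mp h.symm
        · exact absurd ⟨u.1, hb⟩ hB
      · intro h
        exact ⟨huv, Or.inl (Or.inl ((hadj u.1 v.1 h1).mpr h))⟩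
    · intro u v h
      exact Subtype.ext (hl_inj h)
    · intro u v h
      exact Subtype.ext (hr_inj h)
  -- both A and B nonempty
  have side : ∀ j j' : ℕ, 1 ≤ j → j ≤ t → 1 ≤ j' → j' ≤ t → j ≠ j' →
      (∀ a ∈ K j, ∀ y ∈ K j', l a < l y) ∨ (∀ y ∈ K j', ∀ a ∈ K j, l y < l a) := by
    intro j j' hj1 hjt hj'1 hj't hnejj
    obtain ⟨c0, hc0⟩ := hne j hj1 hjt
    obtain ⟨d0, hd0⟩ := hne j' hj'1 hj't
    have hdj : ∀ w : V, w ∈ K j → w ∈ K j' → False :=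
      fun w w1 w2 => hnejj (huniq w j j' hj1 hjt hj'1 hj't w1 w2)
    rcases lt_trichotomy (l c0) (l d0) with h | h | h
    · left
      intro a ha y hy
      by_contra hc
      push_neg at hc
      have hylt : l y < l a :=
        lt_of_le_of_ne hc (fun e => hdj a ha (by rw [← hl_inj e]; exact hy))
      rcases le_or_gt (l c0) (l y) with h1 | h1
      · exact hdj y (hconsec j hj1 hjt c0 hc0 a ha y h1 hylt.le) hy
      · exact hdj c0 hc0 (hconsec j' hj'1 hj't y hy d0 hd0 c0 h1.le h.le)
    · exact absurd (hl_inj h) (fun e => hdj c0 hc0 (by rw [e]; exact hd0))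
    · right
      intro y hy a ha
      by_contra hc
      push_neg at hc
      have halt : l a < l y :=
        lt_of_le_of_ne hc (fun e => hdj a ha (by rw [hl_inj e]; exact hy))
      rcases le_or_gt (l d0) (l a) with h1 | h1
      · exact hdj a ha (hconsec j' hj'1 hj't d0 hd0 y hy a h1 halt.le)
      · exact hdj d0 (hconsec j hj1 hjt a ha c0 hc0 d0 h1.le h.le) hd0
  have hcontr : ∀ a ∈ K (i - 1), ∀ b ∈ K (i + 1), ¬ G.Adj a b := by
    intro a ha b hb hab
    have h := hloc (i - 1) (by omega) (by omega) a ha b hab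
    simp only [Set.mem_union] at h
    rcases h with (h | h) | h
    · rcases Nat.lt_or_ge i 3 with h3 | h3
      · have e0 : i - 1 - 1 = 0 := by omega
        rw [e0, hK0] at h
        exact absurd h (Set.notMem_empty b)
      · have := huniq b (i - 1 - 1) (i + 1) (by omega) (by omega) (by omega)
          (by omega) h hb
        omega
    · have := huniq b (i - 1) (i + 1) (by omega) (by omega) (by omega)
        (by omega) h hb
      omega
    · have := huniq b (i - 1 + 1) (i + 1) (by omega) (by omega) (by omega)
        (by omega) h hb
      omega
  obtain ⟨a1, ha1, y1, hy1, hady1⟩ := hA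
  obtain ⟨b1, hb1, y2, hy2, hadb1⟩ := hB
  have hab_ne : ∀ (a : V), a ∈ K (i-1) → ∀ (b : V), b ∈ K (i+1) → l a ≠ l b := by
    intro a ha b hb e
    have := huniq a (i-1) (i+1) (by omega) (by omega) (by omega) (by omega) ha
      (by rw [hl_inj e]; exact hb)
    omega
  rcases side (i - 1) i (by omega) (by omega) (by omega) (by omega) (by omega)
    with hord1 | hright
  · -- K (i-1) is left of K i
    rcases side i (i + 1) (by omega) (by omega) (by omega) (by omega) (by omega)
      with hord2 | hleft
    · exact aux_contract G l r hlr hadj hl_inj hr_inj hlr_ne hproper t K hne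
        hclique hpart hloc i h1i hit hord1 hord2
    · -- K (i+1) is also left of K i : contradiction
      exfalso
      have h1 : l y1 < r a1 := (hADJ a1 y1 (hord1 a1 ha1 y1 hy1)).mp hady1
      have h2 : l y2 < r b1 := (hADJ b1 y2 (hleft b1 hb1 y2 hy2)).mp hadb1
      rcases lt_trichotomy (l a1) (l b1) with h | h | h
      · exact hcontr a1 ha1 b1 hb1
          ((hADJ a1 b1 h).mpr (lt_trans (hleft b1 hb1 y1 hy1) h1))
      · exact hab_ne a1 ha1 b1 hb1 h
      · exact hcontr a1 ha1 b1 hb1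
          (((hADJ b1 a1 h).mpr (lt_trans (hord1 a1 ha1 y2 hy2) h2)).symm)
  · -- K i is left of K (i-1)
    rcases side (i + 1) i (by omega) (by omega) (by omega) (by omega) (by omega)
      with hleft2 | hright2
    · -- K (i+1) is left of K i : mirrored situation, apply aux with reversed indices
      have e1 : t + 1 - (t + 1 - i) = i := by omega
      have e2 : t + 1 - (t + 1 - i - 1) = i + 1 := by omega
      have e3 : t + 1 - (t + 1 - i + 1) = i - 1 := by omega
      have hne' : ∀ j, 1 ≤ j → j ≤ t → (K (t + 1 - j)).Nonempty :=
        fun j hj1 hjt => hne (t + 1 - j) (by omega) (by omega)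
      have hclique' : ∀ j, 1 ≤ j → j ≤ t → G.IsClique (K (t + 1 - j)) :=
        fun j hj1 hjt => hclique (t + 1 - j) (by omega) (by omega)
      have hpart' : ∀ v : V, ∃! j, 1 ≤ j ∧ j ≤ t ∧ v ∈ K (t + 1 - j) := by
        intro v
        obtain ⟨j, ⟨hj1, hjt, hv⟩, hu⟩ := hpart v
        refine ⟨t + 1 - j, ⟨by omega, by omega, ?_⟩, ?_⟩
        · rw [show t + 1 - (t + 1 - j) = j from by omega]
          exact hv
        · rintro y ⟨hy1, hyt, hvy⟩
          have := hu (t + 1 - y) ⟨by omega, by omega, hvy⟩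
          omega
      have hloc' : ∀ j, 1 ≤ j → j ≤ t → ∀ a ∈ K (t + 1 - j), ∀ w : V,
          G.Adj a w →
          w ∈ K (t + 1 - (j - 1)) ∪ K (t + 1 - j) ∪ K (t + 1 - (j + 1)) := by
        intro j hj1 hjt a ha w hw
        have h := hloc (t + 1 - j) (by omega) (by omega) a ha w hw
        rw [show t + 1 - (j - 1) = (t + 1 - j) + 1 from by omega,
          show t + 1 - (j + 1) = (t + 1 - j) - 1 from by omega]
        simp only [Set.mem_union] at h ⊢
        tauto
      have hord1' : ∀ a ∈ K (t + 1 - (t + 1 - i - 1)),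
          ∀ y ∈ K (t + 1 - (t + 1 - i)), l a < l y := by
        rw [e1, e2]
        exact hleft2
      have hord2' : ∀ y ∈ K (t + 1 - (t + 1 - i)),
          ∀ b ∈ K (t + 1 - (t + 1 - i + 1)), l y < l b := by
        rw [e1, e3]
        exact hright
      have hres := aux_contract G l r hlr hadj hl_inj hr_inj hlr_ne hproper t
        (fun j => K (t + 1 - j)) hne' hclique' hpart' hloc' (t + 1 - i)
        (by omega) (by omega) hord1' hord2'
      beta_reduce at hres
      rw [e2, e3, e1] at hres
      have hgr : (SimpleGraph.fromRel (fun a b : {x : V // x ∉ K i} =>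
          G.Adj a.1 b.1 ∨
          ((a.1 ∈ K (i + 1) ∧ ∃ y ∈ K i, G.Adj a.1 y) ∧
           (b.1 ∈ K (i - 1) ∧ ∃ y ∈ K i, G.Adj b.1 y)))) =
          (SimpleGraph.fromRel (fun a b : {x : V // x ∉ K i} =>
          G.Adj a.1 b.1 ∨
          ((a.1 ∈ K (i - 1) ∧ ∃ y ∈ K i, G.Adj a.1 y) ∧
           (b.1 ∈ K (i + 1) ∧ ∃ y ∈ K i, G.Adj b.1 y)))) := by
        ext a b
        simp only [SimpleGraph.fromRel_adj]
        constructor <;> rintro ⟨hne1, h⟩ <;> refine ⟨hne1, ?_⟩ <;>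
          rcases h with (h | ⟨hq, hp⟩) | (h | ⟨hq, hp⟩)
        · exact Or.inl (Or.inl h)
        · exact Or.inr (Or.inr ⟨hp, hq⟩)
        · exact Or.inr (Or.inl h)
        · exact Or.inl (Or.inr ⟨hp, hq⟩)
        · exact Or.inl (Or.inl h)
        · exact Or.inr (Or.inr ⟨hp, hq⟩)
        · exact Or.inr (Or.inl h)
        · exact Or.inl (Or.inr ⟨hp, hq⟩)
      rwa [hgr] at hres
    · -- K i is left of K(i+1) too: both K(i-1), K(i+1) right of K i: contradiction
      exfalso
      have h1 : l a1 < r y1 := (hADJ y1 a1 (hright y1 hy1 a1 ha1)).mp hady1.symm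
      have h2 : l b1 < r y2 := (hADJ y2 b1 (hright2 y2 hy2 b1 hb1)).mp hadb1.symm
      rcases lt_trichotomy (l a1) (l b1) with h | h | h
      · exact hcontr a1 ha1 b1 hb1
          ((hADJ a1 b1 h).mpr (lt_trans h2 (hOL y2 a1 (hright y2 hy2 a1 ha1))))
      · exact hab_ne a1 ha1 b1 hb1 h
      · exact hcontr a1 ha1 b1 hb1
          (((hADJ b1 a1 h).mpr
            (lt_trans h1 (hOL y1 b1 (hright2 y1 hy1 b1 hb1)))).symm)
end

section
/- Let G be a graph, v a vertex of G, and let K_1, …, K_t be pairwise disjoint nonempty cliques of G − v such that, in the subgraph of G induced by K_1 ∪ … ∪ K_t, every neighbor of a vertex of K_i lies in K_{i−1} ∪ K_i ∪ K_{i+1} (with K_0 = K_{t+1} = ∅). If v has a neighbor in at least five of the cliques K_1, …, K_t, then v has three pairwise nonadjacent neighbors; that is, v is the center of an induced claw of G. -/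
/-- Let `v` be a vertex of `G` and `K_1, …, K_t` pairwise disjoint
nonempty cliques of `G - v` such that in the subgraph of `G` induced by their
union, every neighbor of a vertex of `K_i` lies in `K_{i-1} ∪ K_i ∪ K_{i+1}`
(with `K_0 = K_{t+1} = ∅`).  If `v` has a neighbor in at least five of the
cliques, then `v` has three pairwise nonadjacent neighbors, i.e. `v` is the
center of an induced claw of `G`. -/
theorem stmt_4 {V : Type*} [DecidableEq V] (G : SimpleGraph V) (v : V)
    (t : ℕ) (K : ℕ → Finset V)
    (hK0 : K 0 = ∅) (hKt1 : K (t + 1) = ∅)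
    (hv : ∀ i, 1 ≤ i → i ≤ t → v ∉ K i)
    (hne : ∀ i, 1 ≤ i → i ≤ t → (K i).Nonempty)
    (hclique : ∀ i, 1 ≤ i → i ≤ t → G.IsClique (K i : Set V))
    (hdisj : ∀ i j, 1 ≤ i → i ≤ t → 1 ≤ j → j ≤ t → i ≠ j →
      Disjoint (K i) (K j))
    (hloc : ∀ i, 1 ≤ i → i ≤ t → ∀ u ∈ K i, ∀ w : V,
      (∃ j, 1 ≤ j ∧ j ≤ t ∧ w ∈ K j) → G.Adj u w →
      w ∈ K (i - 1) ∪ K i ∪ K (i + 1))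
    (hmany : 5 ≤ {j : ℕ | 1 ≤ j ∧ j ≤ t ∧ ∃ w ∈ K j, G.Adj v w}.ncard) :
    ∃ a b c : V, G.Adj v a ∧ G.Adj v b ∧ G.Adj v c ∧
      a ≠ b ∧ a ≠ c ∧ b ≠ c ∧ ¬ G.Adj a b ∧ ¬ G.Adj a c ∧ ¬ G.Adj b c := by
  classical
  -- key: vertices in cliques at distance ≥ 2 are nonadjacent
  have nonadj : ∀ i j a b, 1 ≤ i → i ≤ t → 1 ≤ j → j ≤ t → i + 2 ≤ j →
      a ∈ K i → b ∈ K j → ¬ G.Adj a b := by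
    intro i j a b hi1 hit hj1 hjt hij ha hb hadj
    have hb' := hloc i hi1 hit a ha b ⟨j, hj1, hjt, hb⟩ hadj
    simp only [Finset.mem_union] at hb'
    rcases hb' with (h | h) | h
    · rcases Nat.eq_or_lt_of_le hi1 with h1 | h1
      · rw [← h1] at h; simp [hK0] at h
      · have : i - 1 ≠ j := by omega
        exact (Finset.disjoint_left.mp
          (hdisj (i-1) j (by omega) (by omega) hj1 hjt this) h) hb
    · exact (Finset.disjoint_left.mp
        (hdisj i j hi1 hit hj1 hjt (by omega)) h) hb
    · rcases Nat.eq_or_lt_of_le hjt with ht | ht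
      · have hit' : i + 1 ≤ t := by omega
        exact (Finset.disjoint_left.mp
          (hdisj (i+1) j (by omega) hit' hj1 hjt (by omega)) h) hb
      · have hit' : i + 1 ≤ t := by omega
        exact (Finset.disjoint_left.mp
          (hdisj (i+1) j (by omega) hit' hj1 hjt (by omega)) h) hb
  set F : Finset ℕ := (Finset.Icc 1 t).filter (fun j => ∃ w ∈ K j, G.Adj v w) with hF
  have hSF : {j : ℕ | 1 ≤ j ∧ j ≤ t ∧ ∃ w ∈ K j, G.Adj v w} = ↑F := by
    ext j
    simp [hF, Finset.mem_filter, Finset.mem_Icc, and_assoc]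
  rw [hSF, Set.ncard_coe_finset] at hmany
  have e := F.orderIsoOfFin rfl
  have mem : ∀ n (h : n < F.card), (e ⟨n, h⟩ : ℕ) ∈ F := fun n h => (e ⟨n, h⟩).2
  have mono : ∀ m n (hm : m < F.card) (hn : n < F.card), m < n →
      (e ⟨m, hm⟩ : ℕ) < (e ⟨n, hn⟩ : ℕ) := by
    intro m n hm hn hmn
    exact e.strictMono (by exact hmn)
  have h0 : (0:ℕ) < F.card := by omega
  have h1 : (1:ℕ) < F.card := by omega
  have h2 : (2:ℕ) < F.card := by omega
  have h3 : (3:ℕ) < F.card := by omega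
  have h4 : (4:ℕ) < F.card := by omega
  set i1 : ℕ := ↑(e ⟨0, h0⟩) with hi1
  set i2 : ℕ := ↑(e ⟨2, h2⟩) with hi2
  set i3 : ℕ := ↑(e ⟨4, h4⟩) with hi3
  have g01 : i1 < (e ⟨1, h1⟩ : ℕ) := mono 0 1 h0 h1 (by omega)
  have g12 : (e ⟨1, h1⟩ : ℕ) < i2 := mono 1 2 h1 h2 (by omega)
  have g23 : i2 < (e ⟨3, h3⟩ : ℕ) := mono 2 3 h2 h3 (by omega)
  have g34 : (e ⟨3, h3⟩ : ℕ) < i3 := mono 3 4 h3 h4 (by omega)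
  have gap12 : i1 + 2 ≤ i2 := by omega
  have gap23 : i2 + 2 ≤ i3 := by omega
  have getm : ∀ i, i ∈ F → (1 ≤ i ∧ i ≤ t ∧ ∃ w ∈ K i, G.Adj v w) := by
    intro i hi
    simp [hF, Finset.mem_filter, Finset.mem_Icc, and_assoc] at hi
    exact hi
  obtain ⟨hi1l, hi1t, a, ha, hva⟩ := getm i1 (mem 0 h0)
  obtain ⟨hi2l, hi2t, b, hb, hvb⟩ := getm i2 (mem 2 h2)
  obtain ⟨hi3l, hi3t, c, hc, hvc⟩ := getm i3 (mem 4 h4)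
  refine ⟨a, b, c, hva, hvb, hvc, ?_, ?_, ?_, ?_, ?_, ?_⟩
  · intro h; subst h
    exact (Finset.disjoint_left.mp
      (hdisj i1 i2 hi1l hi1t hi2l hi2t (by omega)) ha) hb
  · intro h; subst h
    exact (Finset.disjoint_left.mp
      (hdisj i1 i3 hi1l hi1t hi3l hi3t (by omega)) ha) hc
  · intro h; subst h
    exact (Finset.disjoint_left.mp
      (hdisj i2 i3 hi2l hi2t hi3l hi3t (by omega)) hb) hc
  · exact nonadj i1 i2 a b hi1l hi1t hi2l hi2t gap12 ha hb
  · exact nonadj i1 i3 a c hi1l hi1t hi3l hi3t (by omega) ha hc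
  · exact nonadj i2 i3 b c hi2l hi2t hi3l hi3t gap23 hb hc
end

section
/- Let G be a graph, v a vertex of G, k a natural number, and let K_1, …, K_t be pairwise disjoint nonempty cliques of G − v such that, in the subgraph of G induced by K_1 ∪ … ∪ K_t, every neighbor of a vertex of K_i lies in K_{i−1} ∪ K_i ∪ K_{i+1} (with K_0 = K_{t+1} = ∅). If v has a neighbor in at least k + 5 of the cliques K_1, …, K_t, then for every set S of vertices with |S| ≤ k and v ∉ S, the graph G − S contains three pairwise nonadjacent neighbors of v; that is, G − S contains an induced claw centered at v. -/
/-!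
Choose in each clique met by `N(v)` a neighbour of `v`. The cliques are disjoint, so these
representatives are distinct and at most `k` of them lie in `S`; at least five survive. Among
any five indices there are three pairwise at distance at least two, and by locality vertices of
cliques at distance at least two are nonadjacent, which gives the claw.
-/

open Finset

lemma Finset.exists_add_two_le_add_two_le {s : Finset ℕ} (hs : 5 ≤ #s) :
    ∃ a ∈ s, ∃ b ∈ s, ∃ c ∈ s, a + 2 ≤ b ∧ b + 2 ≤ c := by
  set e := s.orderEmbOfFin rfl
  have hmono (m n : ℕ) (hm : m < n) (hn : n < #s) : e ⟨m, by omega⟩ < e ⟨n, hn⟩ :=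
    e.strictMono (by simpa [Fin.lt_def] using hm)
  have h01 := hmono 0 1 (by omega) (by omega)
  have h12 := hmono 1 2 (by omega) (by omega)
  have h23 := hmono 2 3 (by omega) (by omega)
  have h34 := hmono 3 4 (by omega) (by omega)
  exact ⟨e ⟨0, by omega⟩, s.orderEmbOfFin_mem rfl _, e ⟨2, by omega⟩, s.orderEmbOfFin_mem rfl _,
    e ⟨4, by omega⟩, s.orderEmbOfFin_mem rfl _, by omega, by omega⟩

lemma Finset.card_le_card_filter_notMem_add {α β : Type*} [DecidableEq β] {s : Finset α}
    {f : α → β} (hf : Set.InjOn f s) (S : Finset β) :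
    #s ≤ #(s.filter fun j => f j ∉ S) + #S := by
  have hbad : #(s.filter fun j => f j ∈ S) ≤ #S :=
    card_le_card_of_injOn f (fun j hj => (mem_filter.mp hj).2) (hf.mono (filter_subset _ _))
  have := card_filter_add_card_filter_not (s := s) (fun j => f j ∈ S)
  omega

lemma ne_and_not_adj_of_add_two_le {V : Type*} [DecidableEq V] {G : SimpleGraph V} {t : ℕ}
    {K : ℕ → Finset V} (hK0 : K 0 = ∅)
    (hdisj : ∀ i j, 1 ≤ i → i ≤ t → 1 ≤ j → j ≤ t → i ≠ j → Disjoint (K i) (K j))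
    (hloc : ∀ i, 1 ≤ i → i ≤ t → ∀ u ∈ K i, ∀ w : V,
      (∃ j, 1 ≤ j ∧ j ≤ t ∧ w ∈ K j) → G.Adj u w → w ∈ K (i - 1) ∪ K i ∪ K (i + 1))
    {i j : ℕ} (hi : 1 ≤ i) (hij : i + 2 ≤ j) (hjt : j ≤ t) {u w : V}
    (hu : u ∈ K i) (hw : w ∈ K j) : u ≠ w ∧ ¬ G.Adj u w := by
  have hnot (l : ℕ) (hl : 1 ≤ l) (hlj : l < j) (hlK : w ∈ K l) : False :=
    disjoint_left.mp (hdisj l j hl (by omega) (by omega) hjt (by omega)) hlK hw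
  refine ⟨fun huw => hnot i hi (by omega) (huw ▸ hu), fun hadj => ?_⟩
  rcases mem_union.mp (hloc i hi (by omega) u hu w ⟨j, by omega, hjt, hw⟩ hadj) with h | h
  · rcases mem_union.mp h with h | h
    · rcases Nat.lt_or_ge 1 i with h1 | h1
      · exact hnot (i - 1) (by omega) (by omega) h
      · rw [show i - 1 = 0 by omega, hK0] at h
        exact absurd h (notMem_empty w)
    · exact hnot i hi (by omega) h
  · exact hnot (i + 1) (by omega) (by omega) h

theorem stmt_5_general {V : Type*} [DecidableEq V] (G : SimpleGraph V) (v : V) (k : ℕ)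
    (t : ℕ) (K : ℕ → Finset V)
    (hK0 : K 0 = ∅)
    (hdisj : ∀ i j, 1 ≤ i → i ≤ t → 1 ≤ j → j ≤ t → i ≠ j →
      Disjoint (K i) (K j))
    (hloc : ∀ i, 1 ≤ i → i ≤ t → ∀ u ∈ K i, ∀ w : V,
      (∃ j, 1 ≤ j ∧ j ≤ t ∧ w ∈ K j) → G.Adj u w →
      w ∈ K (i - 1) ∪ K i ∪ K (i + 1))
    (hmany : k + 5 ≤ {j : ℕ | 1 ≤ j ∧ j ≤ t ∧ ∃ w ∈ K j, G.Adj v w}.ncard)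
    (S : Finset V) (hS : S.card ≤ k) :
    ∃ a b c : V, a ∉ S ∧ b ∉ S ∧ c ∉ S ∧
      G.Adj v a ∧ G.Adj v b ∧ G.Adj v c ∧
      a ≠ b ∧ a ≠ c ∧ b ≠ c ∧ ¬ G.Adj a b ∧ ¬ G.Adj a c ∧ ¬ G.Adj b c := by
  classical
  set J : Finset ℕ := (Icc 1 t).filter fun j => ∃ w ∈ K j, G.Adj v w
  have hJ : {j : ℕ | 1 ≤ j ∧ j ≤ t ∧ ∃ w ∈ K j, G.Adj v w} = ↑J := by
    ext j; simp [J, and_assoc]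
  rw [hJ, Set.ncard_coe_finset] at hmany
  have : Nonempty V := ⟨v⟩
  choose! f hfK hfv using fun j (hj : j ∈ J) => (mem_filter.mp hj).2
  have hrange (j : ℕ) (hj : j ∈ J) : 1 ≤ j ∧ j ≤ t := mem_Icc.mp (mem_filter.mp hj).1
  have hinj : Set.InjOn f J := fun i hi j hj hij => by
    by_contra hne
    exact disjoint_left.mp (hdisj i j (hrange i hi).1 (hrange i hi).2 (hrange j hj).1
      (hrange j hj).2 hne) (hfK i hi) (hij ▸ hfK j hj)
  have hgood : 5 ≤ #(J.filter fun j => f j ∉ S) := by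
    have := card_le_card_filter_notMem_add hinj S
    omega
  obtain ⟨a, ha, b, hb, c, hc, hab, hbc⟩ := exists_add_two_le_add_two_le hgood
  simp only [mem_filter] at ha hb hc
  have far {i j : ℕ} (hi : i ∈ J) (hj : j ∈ J) (hij : i + 2 ≤ j) :=
    ne_and_not_adj_of_add_two_le hK0 hdisj hloc (hrange i hi).1 hij (hrange j hj).2
      (hfK i hi) (hfK j hj)
  exact ⟨f a, f b, f c, ha.2, hb.2, hc.2, hfv a ha.1, hfv b hb.1, hfv c hc.1,
    (far ha.1 hb.1 hab).1, (far ha.1 hc.1 (by omega)).1, (far hb.1 hc.1 hbc).1,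
    (far ha.1 hb.1 hab).2, (far ha.1 hc.1 (by omega)).2, (far hb.1 hc.1 hbc).2⟩

/-- With `v` and pairwise disjoint nonempty cliques `K_1, …, K_t`
of `G - v` as before (locality in the subgraph induced by their union), if `v`
has a neighbor in at least `k + 5` of the cliques, then for every vertex set
`S` with `|S| ≤ k` and `v ∉ S`, the graph `G - S` contains three pairwise
nonadjacent neighbors of `v`, i.e. an induced claw centered at `v`. -/
theorem stmt_5 {V : Type*} [DecidableEq V] (G : SimpleGraph V) (v : V) (k : ℕ)
    (t : ℕ) (K : ℕ → Finset V)
    (hK0 : K 0 = ∅) (hKt1 : K (t + 1) = ∅)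
    (hv : ∀ i, 1 ≤ i → i ≤ t → v ∉ K i)
    (hne : ∀ i, 1 ≤ i → i ≤ t → (K i).Nonempty)
    (hclique : ∀ i, 1 ≤ i → i ≤ t → G.IsClique (K i : Set V))
    (hdisj : ∀ i j, 1 ≤ i → i ≤ t → 1 ≤ j → j ≤ t → i ≠ j →
      Disjoint (K i) (K j))
    (hloc : ∀ i, 1 ≤ i → i ≤ t → ∀ u ∈ K i, ∀ w : V,
      (∃ j, 1 ≤ j ∧ j ≤ t ∧ w ∈ K j) → G.Adj u w →
      w ∈ K (i - 1) ∪ K i ∪ K (i + 1))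
    (hmany : k + 5 ≤ {j : ℕ | 1 ≤ j ∧ j ≤ t ∧ ∃ w ∈ K j, G.Adj v w}.ncard)
    (S : Finset V) (hS : S.card ≤ k) (hvS : v ∉ S) :
    ∃ a b c : V, a ∉ S ∧ b ∉ S ∧ c ∉ S ∧
      G.Adj v a ∧ G.Adj v b ∧ G.Adj v c ∧
      a ≠ b ∧ a ≠ c ∧ b ≠ c ∧ ¬ G.Adj a b ∧ ¬ G.Adj a c ∧ ¬ G.Adj b c :=
  stmt_5_general G v k t K hK0 hdisj hloc hmany S hS
end

section
/- Let G be a graph, v a vertex of G, k a natural number, and let K_1, …, K_t be pairwise disjoint nonempty cliques of G − v such that, in the subgraph of G induced by K_1 ∪ … ∪ K_t, every neighbor of a vertex of K_i lies in K_{i−1} ∪ K_i ∪ K_{i+1} (with K_0 = K_{t+1} = ∅). If at least five of the cliques K_1, …, K_t each contain at least k + 1 neighbors of v, then for every set S of vertices with |S| ≤ k and v ∉ S, the graph G − S contains three pairwise nonadjacent neighbors of v; that is, G − S contains an induced claw centered at v. -/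
/-- With `v` and pairwise disjoint nonempty cliques `K_1, …, K_t`
of `G - v` as before (locality in the subgraph induced by their union), if at
least five of the cliques each contain at least `k + 1` neighbors of `v`, then
for every vertex set `S` with `|S| ≤ k` and `v ∉ S`, the graph `G - S`
contains three pairwise nonadjacent neighbors of `v`, i.e. an induced claw
centered at `v`. -/
theorem stmt_6 {V : Type*} [DecidableEq V] (G : SimpleGraph V) (v : V) (k : ℕ)
    (t : ℕ) (K : ℕ → Finset V)
    (hK0 : K 0 = ∅) (hKt1 : K (t + 1) = ∅)
    (hv : ∀ i, 1 ≤ i → i ≤ t → v ∉ K i)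
    (hne : ∀ i, 1 ≤ i → i ≤ t → (K i).Nonempty)
    (hclique : ∀ i, 1 ≤ i → i ≤ t → G.IsClique (K i : Set V))
    (hdisj : ∀ i j, 1 ≤ i → i ≤ t → 1 ≤ j → j ≤ t → i ≠ j →
      Disjoint (K i) (K j))
    (hloc : ∀ i, 1 ≤ i → i ≤ t → ∀ u ∈ K i, ∀ w : V,
      (∃ j, 1 ≤ j ∧ j ≤ t ∧ w ∈ K j) → G.Adj u w →
      w ∈ K (i - 1) ∪ K i ∪ K (i + 1))
    (hmany : 5 ≤ {j : ℕ | 1 ≤ j ∧ j ≤ t ∧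
      k + 1 ≤ {w : V | w ∈ K j ∧ G.Adj v w}.ncard}.ncard)
    (S : Finset V) (hS : S.card ≤ k) (hvS : v ∉ S) :
    ∃ a b c : V, a ∉ S ∧ b ∉ S ∧ c ∉ S ∧
      G.Adj v a ∧ G.Adj v b ∧ G.Adj v c ∧
      a ≠ b ∧ a ≠ c ∧ b ≠ c ∧ ¬ G.Adj a b ∧ ¬ G.Adj a c ∧ ¬ G.Adj b c := by
  classical
  set Jset := {j : ℕ | 1 ≤ j ∧ j ≤ t ∧
      k + 1 ≤ {w : V | w ∈ K j ∧ G.Adj v w}.ncard} with hJ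
  have hJfin : Jset.Finite :=
    Set.Finite.subset (Set.finite_Icc 1 t) (fun j hj => Set.mem_Icc.mpr ⟨hj.1, hj.2.1⟩)
  set F := hJfin.toFinset with hF
  have hFcard : 5 ≤ F.card := by
    rwa [Set.ncard_eq_toFinset_card Jset hJfin] at hmany
  have hmemF : ∀ j, j ∈ F ↔ j ∈ Jset := fun j => hJfin.mem_toFinset
  -- pick three indices pairwise at distance ≥ 2
  have h1 : F.Nonempty := Finset.card_pos.mp (by omega)
  set i1 := F.min' h1 with hi1
  have hi1F : i1 ∈ F := F.min'_mem h1
  set F2 := (F.erase i1).erase (i1 + 1) with hF2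
  have hF2card : 3 ≤ F2.card := by
    have e1 : F.card - 1 ≤ (F.erase i1).card := Finset.pred_card_le_card_erase
    have e2 : (F.erase i1).card - 1 ≤ F2.card := Finset.pred_card_le_card_erase
    omega
  have h2 : F2.Nonempty := Finset.card_pos.mp (by omega)
  set i2 := F2.min' h2 with hi2
  have hi2F2 : i2 ∈ F2 := F2.min'_mem h2
  have hi2F : i2 ∈ F := Finset.mem_of_mem_erase (Finset.mem_of_mem_erase hi2F2)
  have hi12 : i1 + 2 ≤ i2 := by
    have hle : i1 ≤ i2 := F.min'_le i2 hi2F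
    have hne1 : i2 ≠ i1 := Finset.ne_of_mem_erase (Finset.mem_of_mem_erase hi2F2)
    have hne2 : i2 ≠ i1 + 1 := Finset.ne_of_mem_erase hi2F2
    omega
  set F3 := (F2.erase i2).erase (i2 + 1) with hF3
  have hF3card : 1 ≤ F3.card := by
    have e1 : F2.card - 1 ≤ (F2.erase i2).card := Finset.pred_card_le_card_erase
    have e2 : (F2.erase i2).card - 1 ≤ F3.card := Finset.pred_card_le_card_erase
    omega
  have h3 : F3.Nonempty := Finset.card_pos.mp (by omega)
  obtain ⟨i3, hi3F3⟩ := h3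
  have hi3F2 : i3 ∈ F2 := Finset.mem_of_mem_erase (Finset.mem_of_mem_erase hi3F3)
  have hi3F : i3 ∈ F := Finset.mem_of_mem_erase (Finset.mem_of_mem_erase hi3F2)
  have hi23 : i2 + 2 ≤ i3 := by
    have hle : i2 ≤ i3 := F2.min'_le i3 hi3F2
    have hne1 : i3 ≠ i2 := Finset.ne_of_mem_erase (Finset.mem_of_mem_erase hi3F3)
    have hne2 : i3 ≠ i2 + 1 := Finset.ne_of_mem_erase hi3F3
    omega
  have hJ1 : i1 ∈ Jset := (hmemF i1).mp hi1F
  have hJ2 : i2 ∈ Jset := (hmemF i2).mp hi2F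
  have hJ3 : i3 ∈ Jset := (hmemF i3).mp hi3F
  -- pick a vertex avoiding S in each chosen clique
  have pick : ∀ j, j ∈ Jset → ∃ x, x ∈ K j ∧ G.Adj v x ∧ x ∉ S := by
    intro j hj
    have hT : ¬ ({w : V | w ∈ K j ∧ G.Adj v w} ⊆ ↑S) := by
      intro hsub
      have h := Set.ncard_le_ncard hsub S.finite_toSet
      rw [Set.ncard_coe_finset] at h
      have := hj.2.2
      omega
    obtain ⟨x, hx, hxS⟩ := Set.not_subset.mp hT
    exact ⟨x, hx.1, hx.2, by simpa using hxS⟩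
  obtain ⟨a, haK, hva, haS⟩ := pick i1 hJ1
  obtain ⟨b, hbK, hvb, hbS⟩ := pick i2 hJ2
  obtain ⟨c, hcK, hvc, hcS⟩ := pick i3 hJ3
  -- key: far-apart cliques give distinct nonadjacent vertices
  have key : ∀ i j x y, 1 ≤ i → j ≤ t → i + 2 ≤ j → x ∈ K i → y ∈ K j →
      x ≠ y ∧ ¬ G.Adj x y := by
    intro i j x y h1i hjt hij hx hy
    have h1j : 1 ≤ j := by omega
    have hit : i ≤ t := by omega
    have hdij : Disjoint (K i) (K j) := hdisj i j h1i hit h1j hjt (by omega)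
    constructor
    · rintro rfl
      exact (Finset.disjoint_left.mp hdij hx) hy
    · intro hadj
      have hmem := hloc i h1i hit x hx y ⟨j, h1j, hjt, hy⟩ hadj
      simp only [Finset.mem_union] at hmem
      rcases hmem with (h | h) | h
      · rcases Nat.lt_or_ge i 2 with hlt | hge
        · have : i - 1 = 0 := by omega
          rw [this, hK0] at h
          exact absurd h (Finset.notMem_empty y)
        · exact (Finset.disjoint_left.mp
            (hdisj (i - 1) j (by omega) (by omega) h1j hjt (by omega)) h) hy
      · exact (Finset.disjoint_left.mp hdij h) hy
      · exact (Finset.disjoint_left.mp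
          (hdisj (i + 1) j (by omega) (by omega) h1j hjt (by omega)) h) hy
  have h1t := hJ1.1
  have h3t := hJ3.2.1
  obtain ⟨hab, hnab⟩ := key i1 i2 a b h1t (by omega) hi12 haK hbK
  obtain ⟨hac, hnac⟩ := key i1 i3 a c h1t h3t (by omega) haK hcK
  obtain ⟨hbc, hnbc⟩ := key i2 i3 b c (by omega) h3t hi23 hbK hcK
  exact ⟨a, b, c, haS, hbS, hcS, hva, hvb, hvc, hab, hac, hbc, hnab, hnac, hnbc⟩
end

section
/- Let G be a graph and M ⊆ V(G) such that G − M admits a proper interval model, and let K_1, …, K_t be a partition of V(G) ∖ M into nonempty cliques, each consisting of consecutive vertices in the ordering of the model by left endpoints, such that in G − M every neighbor of a vertex of K_i lies in K_{i−1} ∪ K_i ∪ K_{i+1} (with K_0 = K_{t+1} = ∅). If 3 ≤ ℓ ≤ t − 2 and no vertex of K_i is adjacent in G to a vertex of M for any ℓ − 2 ≤ i ≤ ℓ + 2, then no vertex of K_ℓ belongs to an induced subgraph of G isomorphic to a claw, a net, or a tent. -/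
/-- `w` belongs to an induced claw of `G`: a center `c` with three pairwise
nonadjacent neighbors `x, y, z`. -/
def InInducedClaw {V : Type*} (G : SimpleGraph V) (w : V) : Prop :=
  ∃ c x y z : V, (w = c ∨ w = x ∨ w = y ∨ w = z) ∧
    List.Pairwise (· ≠ ·) [c, x, y, z] ∧
    G.Adj c x ∧ G.Adj c y ∧ G.Adj c z ∧
    ¬ G.Adj x y ∧ ¬ G.Adj x z ∧ ¬ G.Adj y z

/-- `w` belongs to an induced net of `G`: a triangle `x₁ x₂ x₃` with three
pairwise nonadjacent pendant vertices `y₁, y₂, y₃`, where `yᵢ` is adjacent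
only to `xᵢ`. -/
def InInducedNet {V : Type*} (G : SimpleGraph V) (w : V) : Prop :=
  ∃ x₁ x₂ x₃ y₁ y₂ y₃ : V,
    (w = x₁ ∨ w = x₂ ∨ w = x₃ ∨ w = y₁ ∨ w = y₂ ∨ w = y₃) ∧
    List.Pairwise (· ≠ ·) [x₁, x₂, x₃, y₁, y₂, y₃] ∧
    G.Adj x₁ x₂ ∧ G.Adj x₂ x₃ ∧ G.Adj x₁ x₃ ∧
    G.Adj y₁ x₁ ∧ G.Adj y₂ x₂ ∧ G.Adj y₃ x₃ ∧
    ¬ G.Adj y₁ x₂ ∧ ¬ G.Adj y₁ x₃ ∧ ¬ G.Adj y₂ x₁ ∧ ¬ G.Adj y₂ x₃ ∧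
    ¬ G.Adj y₃ x₁ ∧ ¬ G.Adj y₃ x₂ ∧
    ¬ G.Adj y₁ y₂ ∧ ¬ G.Adj y₁ y₃ ∧ ¬ G.Adj y₂ y₃

/-- `w` belongs to an induced tent (3-sun) of `G`: a triangle `x₁ x₂ x₃` with
three pairwise nonadjacent vertices `y₁, y₂, y₃`, where `yᵢ` is adjacent
exactly to `xᵢ` and `x_{i+1}` (indices mod 3). -/
def InInducedTent {V : Type*} (G : SimpleGraph V) (w : V) : Prop :=
  ∃ x₁ x₂ x₃ y₁ y₂ y₃ : V,
    (w = x₁ ∨ w = x₂ ∨ w = x₃ ∨ w = y₁ ∨ w = y₂ ∨ w = y₃) ∧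
    List.Pairwise (· ≠ ·) [x₁, x₂, x₃, y₁, y₂, y₃] ∧
    G.Adj x₁ x₂ ∧ G.Adj x₂ x₃ ∧ G.Adj x₁ x₃ ∧
    G.Adj y₁ x₁ ∧ G.Adj y₁ x₂ ∧ G.Adj y₂ x₂ ∧ G.Adj y₂ x₃ ∧
    G.Adj y₃ x₃ ∧ G.Adj y₃ x₁ ∧
    ¬ G.Adj y₁ x₃ ∧ ¬ G.Adj y₂ x₁ ∧ ¬ G.Adj y₃ x₂ ∧
    ¬ G.Adj y₁ y₂ ∧ ¬ G.Adj y₁ y₃ ∧ ¬ G.Adj y₂ y₃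

/-- Let `M ⊆ V(G)` with `G - M` admitting a proper interval model,
and let `K_1, …, K_t` be a partition of `V(G) ∖ M` into nonempty cliques, each
consisting of consecutive vertices in the ordering by left endpoints, such
that in `G - M` every neighbor of a vertex of `K_i` lies in
`K_{i-1} ∪ K_i ∪ K_{i+1}` (with `K_0 = K_{t+1} = ∅`).  If `3 ≤ ℓ ≤ t - 2` and
no vertex of `K_i` is adjacent in `G` to a vertex of `M` for
`ℓ - 2 ≤ i ≤ ℓ + 2`, then no vertex of `K_ℓ` belongs to an induced claw, net,
or tent of `G`. -/
theorem stmt_8 {V : Type*} (G : SimpleGraph V) (M : Set V)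
    (l r : V → ℝ)
    (hlr : ∀ v : V, v ∉ M → l v < r v)
    (hadj : ∀ u v : V, u ∉ M → v ∉ M → u ≠ v →
      (G.Adj u v ↔ (Set.Icc (l u) (r u) ∩ Set.Icc (l v) (r v)).Nonempty))
    (hl_inj : ∀ u v : V, u ∉ M → v ∉ M → l u = l v → u = v)
    (hr_inj : ∀ u v : V, u ∉ M → v ∉ M → r u = r v → u = v)
    (hlr_ne : ∀ u v : V, u ∉ M → v ∉ M → l u ≠ r v)
    (hproper : ∀ u v : V, u ∉ M → v ∉ M → ¬ (l u < l v ∧ r v < r u))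
    (t : ℕ) (K : ℕ → Set V)
    (hK0 : K 0 = ∅) (hKt1 : K (t + 1) = ∅)
    (hsub : ∀ i, 1 ≤ i → i ≤ t → ∀ x ∈ K i, x ∉ M)
    (hne : ∀ i, 1 ≤ i → i ≤ t → (K i).Nonempty)
    (hclique : ∀ i, 1 ≤ i → i ≤ t → G.IsClique (K i))
    (hpart : ∀ x : V, x ∉ M → ∃! i, 1 ≤ i ∧ i ≤ t ∧ x ∈ K i)
    (hconsec : ∀ i, 1 ≤ i → i ≤ t → ∀ a ∈ K i, ∀ b ∈ K i, ∀ x : V, x ∉ M →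
      l a ≤ l x → l x ≤ l b → x ∈ K i)
    (hloc : ∀ i, 1 ≤ i → i ≤ t → ∀ u ∈ K i, ∀ w : V, w ∉ M → G.Adj u w →
      w ∈ K (i - 1) ∪ K i ∪ K (i + 1))
    (ℓ : ℕ) (h3ℓ : 3 ≤ ℓ) (hℓt : ℓ + 2 ≤ t)
    (hnadj : ∀ i, ℓ - 2 ≤ i → i ≤ ℓ + 2 → ∀ a ∈ K i, ∀ x ∈ M, ¬ G.Adj a x) :
    ∀ w ∈ K ℓ, ¬ InInducedClaw G w ∧ ¬ InInducedNet G w ∧ ¬ InInducedTent G w := by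
  
  -- interval facts
  have hAB : ∀ u v : V, u ∉ M → v ∉ M → G.Adj u v → l u ≤ r v ∧ l v ≤ r u := by
    intro u v hu hv h
    obtain ⟨p, ⟨h1, h2⟩, h3, h4⟩ := (hadj u v hu hv h.ne).1 h
    exact ⟨h1.trans h4, h3.trans h2⟩
  have hdisj : ∀ u v : V, u ∉ M → v ∉ M → u ≠ v → ¬G.Adj u v → r u < l v ∨ r v < l u := by
    intro u v hu hv hne h
    by_contra hc
    push_neg at hc
    exact h ((hadj u v hu hv hne).2 ⟨max (l u) (l v),
      ⟨le_max_left _ _, max_le (hlr u hu).le hc.1⟩,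
      ⟨le_max_right _ _, max_le hc.2 (hlr v hv).le⟩⟩)
  have mid : ∀ c a m b : V, c ∉ M → a ∉ M → m ∉ M → b ∉ M →
      G.Adj c a → G.Adj c b → r a < l m → r m < l b → False := by
    intro c a m b hc ha hm hb hca hcb h1 h2
    exact hproper c m hc hm ⟨lt_of_le_of_lt (hAB c a hc ha hca).1 h1,
      lt_of_lt_of_le h2 (hAB c b hc hb hcb).2⟩
  have claw_int : ∀ c x y z : V, c ∉ M → x ∉ M → y ∉ M → z ∉ M →
      List.Pairwise (· ≠ ·) [c, x, y, z] →
      G.Adj c x → G.Adj c y → G.Adj c z →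
      ¬G.Adj x y → ¬G.Adj x z → ¬G.Adj y z → False := by
    intro c x y z hc hx hy hz hp acx acy acz hxy hxz hyz
    simp [List.pairwise_cons] at hp
    obtain ⟨⟨-, -, -⟩, ⟨nxy, nxz⟩, nyz⟩ := hp
    have hx' := hlr x hx
    have hy' := hlr y hy
    have hz' := hlr z hz
    rcases hdisj x y hx hy nxy hxy with h1 | h1 <;>
      rcases hdisj x z hx hz nxz hxz with h2 | h2 <;>
      rcases hdisj y z hy hz nyz hyz with h3 | h3
    · exact mid c x y z hc hx hy hz acx acz h1 h3
    · exact mid c x z y hc hx hz hy acx acy h2 h3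
    · linarith
    · exact mid c z x y hc hz hx hy acz acy h2 h1
    · exact mid c y x z hc hy hx hz acy acz h1 h2
    · linarith
    · exact mid c y z x hc hy hz hx acy acx h3 h2
    · exact mid c z y x hc hz hy hx acz acx h3 h1
  have sides : ∀ a m b u v : V, a ∉ M → m ∉ M → b ∉ M → u ∉ M → v ∉ M →
      m ≠ u → m ≠ v → r a < l m → r m < l b →
      G.Adj a u → G.Adj b v → ¬G.Adj m u → ¬G.Adj m v → G.Adj u v → False := by
    intro a m b u v ha hm hb hu hv hmu hmv h1 h2 hau hbv hnu hnv huv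
    have e1 := hAB a u ha hu hau
    have e2 := hAB b v hb hv hbv
    have e3 := hAB u v hu hv huv
    have hm' := hlr m hm
    rcases hdisj m u hm hu hmu hnu with h | h <;>
      rcases hdisj m v hm hv hmv hnv with h' | h' <;>
      linarith [e1.1, e1.2, e2.1, e2.2, e3.1, e3.2]
  have span : ∀ a m b u : V, a ∉ M → m ∉ M → b ∉ M → u ∉ M → m ≠ u →
      r a < l m → r m < l b → G.Adj a u → G.Adj b u → ¬G.Adj m u → False := by
    intro a m b u ha hm hb hu hmu h1 h2 hau hbu hnu
    have e1 := hAB a u ha hu hau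
    have e2 := hAB b u hb hu hbu
    have hm' := hlr m hm
    rcases hdisj m u hm hu hmu hnu with h | h <;>
      linarith [e1.1, e1.2, e2.1, e2.2]
  have net_int : ∀ x1 x2 x3 y1 y2 y3 : V,
      x1 ∉ M → x2 ∉ M → x3 ∉ M → y1 ∉ M → y2 ∉ M → y3 ∉ M →
      List.Pairwise (· ≠ ·) [x1, x2, x3, y1, y2, y3] →
      G.Adj x1 x2 → G.Adj x2 x3 → G.Adj x1 x3 →
      G.Adj y1 x1 → G.Adj y2 x2 → G.Adj y3 x3 →
      ¬G.Adj y1 x2 → ¬G.Adj y1 x3 → ¬G.Adj y2 x1 → ¬G.Adj y2 x3 →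
      ¬G.Adj y3 x1 → ¬G.Adj y3 x2 →
      ¬G.Adj y1 y2 → ¬G.Adj y1 y3 → ¬G.Adj y2 y3 → False := by
    intro x1 x2 x3 y1 y2 y3 hx1 hx2 hx3 hy1 hy2 hy3 hp a12 a23 a13 b1 b2 b3
      n12 n13 n21 n23 n31 n32 m12 m13 m23
    simp [List.pairwise_cons] at hp
    obtain ⟨⟨-, -, e14, e15, e16⟩, ⟨-, e24, e25, e26⟩, ⟨e34, e35, e36⟩, ⟨f12, f13⟩, f23⟩ := hp
    have hy1' := hlr y1 hy1
    have hy2' := hlr y2 hy2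
    have hy3' := hlr y3 hy3
    rcases hdisj y1 y2 hy1 hy2 f12 m12 with h1 | h1 <;>
      rcases hdisj y1 y3 hy1 hy3 f13 m13 with h2 | h2 <;>
      rcases hdisj y2 y3 hy2 hy3 f23 m23 with h3 | h3
    · exact sides y1 y2 y3 x1 x3 hy1 hy2 hy3 hx1 hx3 (Ne.symm e15) (Ne.symm e35)
        h1 h3 b1 b3 n21 n23 a13
    · exact sides y1 y3 y2 x1 x2 hy1 hy3 hy2 hx1 hx2 (Ne.symm e16) (Ne.symm e26)
        h2 h3 b1 b2 n31 n32 a12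
    · linarith
    · exact sides y3 y1 y2 x3 x2 hy3 hy1 hy2 hx3 hx2 (Ne.symm e34) (Ne.symm e24)
        h2 h1 b3 b2 n13 n12 a23.symm
    · exact sides y2 y1 y3 x2 x3 hy2 hy1 hy3 hx2 hx3 (Ne.symm e24) (Ne.symm e34)
        h1 h2 b2 b3 n12 n13 a23
    · linarith
    · exact sides y2 y3 y1 x2 x1 hy2 hy3 hy1 hx2 hx1 (Ne.symm e26) (Ne.symm e16)
        h3 h2 b2 b1 n32 n31 a12.symm
    · exact sides y3 y2 y1 x3 x1 hy3 hy2 hy1 hx3 hx1 (Ne.symm e35) (Ne.symm e15)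
        h3 h1 b3 b1 n23 n21 a13.symm
  have tent_int : ∀ x1 x2 x3 y1 y2 y3 : V,
      x1 ∉ M → x2 ∉ M → x3 ∉ M → y1 ∉ M → y2 ∉ M → y3 ∉ M →
      List.Pairwise (· ≠ ·) [x1, x2, x3, y1, y2, y3] →
      G.Adj x1 x2 → G.Adj x2 x3 → G.Adj x1 x3 →
      G.Adj y1 x1 → G.Adj y1 x2 → G.Adj y2 x2 → G.Adj y2 x3 →
      G.Adj y3 x3 → G.Adj y3 x1 →
      ¬G.Adj y1 x3 → ¬G.Adj y2 x1 → ¬G.Adj y3 x2 →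
      ¬G.Adj y1 y2 → ¬G.Adj y1 y3 → ¬G.Adj y2 y3 → False := by
    intro x1 x2 x3 y1 y2 y3 hx1 hx2 hx3 hy1 hy2 hy3 hp a12 a23 a13
      b11 b12 b22 b23 b33 b31 n13 n21 n32 m12 m13 m23
    simp [List.pairwise_cons] at hp
    obtain ⟨⟨-, -, e14, e15, e16⟩, ⟨-, e24, e25, e26⟩, ⟨e34, e35, e36⟩, ⟨f12, f13⟩, f23⟩ := hp
    have hy1' := hlr y1 hy1
    have hy2' := hlr y2 hy2
    have hy3' := hlr y3 hy3
    rcases hdisj y1 y2 hy1 hy2 f12 m12 with h1 | h1 <;>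
      rcases hdisj y1 y3 hy1 hy3 f13 m13 with h2 | h2 <;>
      rcases hdisj y2 y3 hy2 hy3 f23 m23 with h3 | h3
    · exact span y1 y2 y3 x1 hy1 hy2 hy3 hx1 (Ne.symm e15) h1 h3 b11 b31 n21
    · exact span y1 y3 y2 x2 hy1 hy3 hy2 hx2 (Ne.symm e26) h2 h3 b12 b22 n32
    · linarith
    · exact span y3 y1 y2 x3 hy3 hy1 hy2 hx3 (Ne.symm e34) h2 h1 b33 b23 n13
    · exact span y2 y1 y3 x3 hy2 hy1 hy3 hx3 (Ne.symm e34) h1 h2 b23 b33 n13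
    · linarith
    · exact span y2 y3 y1 x2 hy2 hy3 hy1 hx2 (Ne.symm e26) h3 h2 b22 b12 n32
    · exact span y3 y2 y1 x1 hy3 hy2 hy1 hx1 (Ne.symm e15) h3 h1 b31 b11 n21
  -- membership lemmas
  have step1 : ∀ i, ℓ - 2 ≤ i → i ≤ ℓ + 2 → ∀ u, u ∈ K i → ∀ v, G.Adj u v → v ∉ M := by
    intro i h1 h2 u hu v hva hvM
    exact hnadj i h1 h2 u hu v hvM hva
  have step2 : ∀ i, 1 ≤ i → i ≤ t → ∀ u, u ∈ K i → ∀ v, v ∉ M → G.Adj u v →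
      ∃ j, i - 1 ≤ j ∧ j ≤ i + 1 ∧ 1 ≤ j ∧ j ≤ t ∧ v ∈ K j := by
    intro i h1 h2 u hu v hv hva
    rcases hloc i h1 h2 u hu v hv hva with (h | h) | h
    · by_cases hi : i = 1
      · rw [hi] at h; norm_num [hK0] at h
      · exact ⟨i - 1, le_refl _, by omega, by omega, by omega, h⟩
    · exact ⟨i, by omega, by omega, h1, h2, h⟩
    · by_cases hi : i = t
      · rw [hi, hKt1] at h; exact absurd h (Set.notMem_empty v)
      · exact ⟨i + 1, by omega, le_refl _, by omega, by omega, h⟩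
  intro w hw
  have hwM : w ∉ M := hsub ℓ (by omega) (by omega) w hw
  refine ⟨?_, ?_, ?_⟩
  · rintro ⟨c, x, y, z, hwc, hp, acx, acy, acz, hxy, hxz, hyz⟩
    have main : c ∉ M ∧ x ∉ M ∧ y ∉ M ∧ z ∉ M := by
      rcases hwc with rfl | rfl | rfl | rfl
      · exact ⟨hwM, step1 ℓ (by omega) (by omega) _ hw x acx,
          step1 ℓ (by omega) (by omega) _ hw y acy,
          step1 ℓ (by omega) (by omega) _ hw z acz⟩
      · have hcM : c ∉ M := step1 ℓ (by omega) (by omega) _ hw c acx.symm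
        obtain ⟨j, hj1, hj2, hj3, hj4, hcK⟩ :=
          step2 ℓ (by omega) (by omega) _ hw c hcM acx.symm
        exact ⟨hcM, hwM, step1 j (by omega) (by omega) c hcK y acy,
          step1 j (by omega) (by omega) c hcK z acz⟩
      · have hcM : c ∉ M := step1 ℓ (by omega) (by omega) _ hw c acy.symm
        obtain ⟨j, hj1, hj2, hj3, hj4, hcK⟩ :=
          step2 ℓ (by omega) (by omega) _ hw c hcM acy.symm
        exact ⟨hcM, step1 j (by omega) (by omega) c hcK x acx, hwM,
          step1 j (by omega) (by omega) c hcK z acz⟩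
      · have hcM : c ∉ M := step1 ℓ (by omega) (by omega) _ hw c acz.symm
        obtain ⟨j, hj1, hj2, hj3, hj4, hcK⟩ :=
          step2 ℓ (by omega) (by omega) _ hw c hcM acz.symm
        exact ⟨hcM, step1 j (by omega) (by omega) c hcK x acx,
          step1 j (by omega) (by omega) c hcK y acy, hwM⟩
    exact claw_int c x y z main.1 main.2.1 main.2.2.1 main.2.2.2 hp acx acy acz hxy hxz hyz
  · rintro ⟨x1, x2, x3, y1, y2, y3, hwc, hp, a12, a23, a13, b1, b2, b3,
      n12, n13, n21, n23, n31, n32, m12, m13, m23⟩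
    have main : x1 ∉ M ∧ x2 ∉ M ∧ x3 ∉ M ∧ y1 ∉ M ∧ y2 ∉ M ∧ y3 ∉ M := by
      rcases hwc with rfl | rfl | rfl | rfl | rfl | rfl
      · -- w = x1
        have h2 : x2 ∉ M := step1 ℓ (by omega) (by omega) _ hw x2 a12
        have h3 : x3 ∉ M := step1 ℓ (by omega) (by omega) _ hw x3 a13
        have g1 : y1 ∉ M := step1 ℓ (by omega) (by omega) _ hw y1 b1.symm
        obtain ⟨j2, hj1, hj2, hj3, hj4, hK2⟩ :=
          step2 ℓ (by omega) (by omega) _ hw x2 h2 a12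
        obtain ⟨j3, hk1, hk2, hk3, hk4, hK3⟩ :=
          step2 ℓ (by omega) (by omega) _ hw x3 h3 a13
        exact ⟨hwM, h2, h3, g1, step1 j2 (by omega) (by omega) x2 hK2 y2 b2.symm,
          step1 j3 (by omega) (by omega) x3 hK3 y3 b3.symm⟩
      · -- w = x2
        have h1 : x1 ∉ M := step1 ℓ (by omega) (by omega) _ hw x1 a12.symm
        have h3 : x3 ∉ M := step1 ℓ (by omega) (by omega) _ hw x3 a23
        have g2 : y2 ∉ M := step1 ℓ (by omega) (by omega) _ hw y2 b2.symm
        obtain ⟨j1, hj1, hj2, hj3, hj4, hK1⟩ :=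
          step2 ℓ (by omega) (by omega) _ hw x1 h1 a12.symm
        obtain ⟨j3, hk1, hk2, hk3, hk4, hK3⟩ :=
          step2 ℓ (by omega) (by omega) _ hw x3 h3 a23
        exact ⟨h1, hwM, h3, step1 j1 (by omega) (by omega) x1 hK1 y1 b1.symm, g2,
          step1 j3 (by omega) (by omega) x3 hK3 y3 b3.symm⟩
      · -- w = x3
        have h1 : x1 ∉ M := step1 ℓ (by omega) (by omega) _ hw x1 a13.symm
        have h2 : x2 ∉ M := step1 ℓ (by omega) (by omega) _ hw x2 a23.symm
        have g3 : y3 ∉ M := step1 ℓ (by omega) (by omega) _ hw y3 b3.symm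
        obtain ⟨j1, hj1, hj2, hj3, hj4, hK1⟩ :=
          step2 ℓ (by omega) (by omega) _ hw x1 h1 a13.symm
        obtain ⟨j2, hk1, hk2, hk3, hk4, hK2⟩ :=
          step2 ℓ (by omega) (by omega) _ hw x2 h2 a23.symm
        exact ⟨h1, h2, hwM, step1 j1 (by omega) (by omega) x1 hK1 y1 b1.symm,
          step1 j2 (by omega) (by omega) x2 hK2 y2 b2.symm, g3⟩
      · -- w = y1
        have h1 : x1 ∉ M := step1 ℓ (by omega) (by omega) _ hw x1 b1
        obtain ⟨j1, hj1, hj2, hj3, hj4, hK1⟩ :=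
          step2 ℓ (by omega) (by omega) _ hw x1 h1 b1
        have h2 : x2 ∉ M := step1 j1 (by omega) (by omega) x1 hK1 x2 a12
        have h3 : x3 ∉ M := step1 j1 (by omega) (by omega) x1 hK1 x3 a13
        obtain ⟨j2, hk1, hk2, hk3, hk4, hK2⟩ :=
          step2 j1 (by omega) (by omega) x1 hK1 x2 h2 a12
        obtain ⟨j3, hm1, hm2, hm3, hm4, hK3⟩ :=
          step2 j1 (by omega) (by omega) x1 hK1 x3 h3 a13
        exact ⟨h1, h2, h3, hwM, step1 j2 (by omega) (by omega) x2 hK2 y2 b2.symm,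
          step1 j3 (by omega) (by omega) x3 hK3 y3 b3.symm⟩
      · -- w = y2
        have h2 : x2 ∉ M := step1 ℓ (by omega) (by omega) _ hw x2 b2
        obtain ⟨j2, hj1, hj2, hj3, hj4, hK2⟩ :=
          step2 ℓ (by omega) (by omega) _ hw x2 h2 b2
        have h1 : x1 ∉ M := step1 j2 (by omega) (by omega) x2 hK2 x1 a12.symm
        have h3 : x3 ∉ M := step1 j2 (by omega) (by omega) x2 hK2 x3 a23
        obtain ⟨j1, hk1, hk2, hk3, hk4, hK1⟩ :=
          step2 j2 (by omega) (by omega) x2 hK2 x1 h1 a12.symm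
        obtain ⟨j3, hm1, hm2, hm3, hm4, hK3⟩ :=
          step2 j2 (by omega) (by omega) x2 hK2 x3 h3 a23
        exact ⟨h1, h2, h3, step1 j1 (by omega) (by omega) x1 hK1 y1 b1.symm, hwM,
          step1 j3 (by omega) (by omega) x3 hK3 y3 b3.symm⟩
      · -- w = y3
        have h3 : x3 ∉ M := step1 ℓ (by omega) (by omega) _ hw x3 b3
        obtain ⟨j3, hj1, hj2, hj3, hj4, hK3⟩ :=
          step2 ℓ (by omega) (by omega) _ hw x3 h3 b3
        have h1 : x1 ∉ M := step1 j3 (by omega) (by omega) x3 hK3 x1 a13.symm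
        have h2 : x2 ∉ M := step1 j3 (by omega) (by omega) x3 hK3 x2 a23.symm
        obtain ⟨j1, hk1, hk2, hk3, hk4, hK1⟩ :=
          step2 j3 (by omega) (by omega) x3 hK3 x1 h1 a13.symm
        obtain ⟨j2, hm1, hm2, hm3, hm4, hK2⟩ :=
          step2 j3 (by omega) (by omega) x3 hK3 x2 h2 a23.symm
        exact ⟨h1, h2, h3, step1 j1 (by omega) (by omega) x1 hK1 y1 b1.symm,
          step1 j2 (by omega) (by omega) x2 hK2 y2 b2.symm, hwM⟩
    exact net_int x1 x2 x3 y1 y2 y3 main.1 main.2.1 main.2.2.1 main.2.2.2.1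
      main.2.2.2.2.1 main.2.2.2.2.2 hp a12 a23 a13 b1 b2 b3
      n12 n13 n21 n23 n31 n32 m12 m13 m23
  · rintro ⟨x1, x2, x3, y1, y2, y3, hwc, hp, a12, a23, a13, b11, b12, b22, b23,
      b33, b31, n13, n21, n32, m12, m13, m23⟩
    have main : x1 ∉ M ∧ x2 ∉ M ∧ x3 ∉ M ∧ y1 ∉ M ∧ y2 ∉ M ∧ y3 ∉ M := by
      rcases hwc with rfl | rfl | rfl | rfl | rfl | rfl
      · -- w = x1: nbrs x2 x3 y1 y3; y2 via x2
        have h2 : x2 ∉ M := step1 ℓ (by omega) (by omega) _ hw x2 a12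
        have h3 : x3 ∉ M := step1 ℓ (by omega) (by omega) _ hw x3 a13
        have g1 : y1 ∉ M := step1 ℓ (by omega) (by omega) _ hw y1 b11.symm
        have g3 : y3 ∉ M := step1 ℓ (by omega) (by omega) _ hw y3 b31.symm
        obtain ⟨j2, hj1, hj2, hj3, hj4, hK2⟩ :=
          step2 ℓ (by omega) (by omega) _ hw x2 h2 a12
        exact ⟨hwM, h2, h3, g1, step1 j2 (by omega) (by omega) x2 hK2 y2 b22.symm, g3⟩
      · -- w = x2: nbrs x1 x3 y1 y2; y3 via x3
        have h1 : x1 ∉ M := step1 ℓ (by omega) (by omega) _ hw x1 a12.symm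
        have h3 : x3 ∉ M := step1 ℓ (by omega) (by omega) _ hw x3 a23
        have g1 : y1 ∉ M := step1 ℓ (by omega) (by omega) _ hw y1 b12.symm
        have g2 : y2 ∉ M := step1 ℓ (by omega) (by omega) _ hw y2 b22.symm
        obtain ⟨j3, hj1, hj2, hj3, hj4, hK3⟩ :=
          step2 ℓ (by omega) (by omega) _ hw x3 h3 a23
        exact ⟨h1, hwM, h3, g1, g2, step1 j3 (by omega) (by omega) x3 hK3 y3 b33.symm⟩
      · -- w = x3: nbrs x1 x2 y2 y3; y1 via x1
        have h1 : x1 ∉ M := step1 ℓ (by omega) (by omega) _ hw x1 a13.symm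
        have h2 : x2 ∉ M := step1 ℓ (by omega) (by omega) _ hw x2 a23.symm
        have g2 : y2 ∉ M := step1 ℓ (by omega) (by omega) _ hw y2 b23.symm
        have g3 : y3 ∉ M := step1 ℓ (by omega) (by omega) _ hw y3 b33.symm
        obtain ⟨j1, hj1, hj2, hj3, hj4, hK1⟩ :=
          step2 ℓ (by omega) (by omega) _ hw x1 h1 a13.symm
        exact ⟨h1, h2, hwM, step1 j1 (by omega) (by omega) x1 hK1 y1 b11.symm, g2, g3⟩
      · -- w = y1: nbrs x1 x2; x3, y3 via x1; y2 via x2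
        have h1 : x1 ∉ M := step1 ℓ (by omega) (by omega) _ hw x1 b11
        have h2 : x2 ∉ M := step1 ℓ (by omega) (by omega) _ hw x2 b12
        obtain ⟨j1, hj1, hj2, hj3, hj4, hK1⟩ :=
          step2 ℓ (by omega) (by omega) _ hw x1 h1 b11
        obtain ⟨j2, hk1, hk2, hk3, hk4, hK2⟩ :=
          step2 ℓ (by omega) (by omega) _ hw x2 h2 b12
        exact ⟨h1, h2, step1 j1 (by omega) (by omega) x1 hK1 x3 a13, hwM,
          step1 j2 (by omega) (by omega) x2 hK2 y2 b22.symm,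
          step1 j1 (by omega) (by omega) x1 hK1 y3 b31.symm⟩
      · -- w = y2: nbrs x2 x3; x1, y1 via x2; y3 via x3
        have h2 : x2 ∉ M := step1 ℓ (by omega) (by omega) _ hw x2 b22
        have h3 : x3 ∉ M := step1 ℓ (by omega) (by omega) _ hw x3 b23
        obtain ⟨j2, hj1, hj2, hj3, hj4, hK2⟩ :=
          step2 ℓ (by omega) (by omega) _ hw x2 h2 b22
        obtain ⟨j3, hk1, hk2, hk3, hk4, hK3⟩ :=
          step2 ℓ (by omega) (by omega) _ hw x3 h3 b23
        exact ⟨step1 j2 (by omega) (by omega) x2 hK2 x1 a12.symm, h2, h3,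
          step1 j2 (by omega) (by omega) x2 hK2 y1 b12.symm, hwM,
          step1 j3 (by omega) (by omega) x3 hK3 y3 b33.symm⟩
      · -- w = y3: nbrs x3 x1; x2, y1 via x1; y2 via x3
        have h3 : x3 ∉ M := step1 ℓ (by omega) (by omega) _ hw x3 b33
        have h1 : x1 ∉ M := step1 ℓ (by omega) (by omega) _ hw x1 b31
        obtain ⟨j3, hj1, hj2, hj3, hj4, hK3⟩ :=
          step2 ℓ (by omega) (by omega) _ hw x3 h3 b33
        obtain ⟨j1, hk1, hk2, hk3, hk4, hK1⟩ :=
          step2 ℓ (by omega) (by omega) _ hw x1 h1 b31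
        exact ⟨h1, step1 j1 (by omega) (by omega) x1 hK1 x2 a12, h3,
          step1 j1 (by omega) (by omega) x1 hK1 y1 b11.symm,
          step1 j3 (by omega) (by omega) x3 hK3 y2 b23.symm, hwM⟩
    exact tent_int x1 x2 x3 y1 y2 y3 main.1 main.2.1 main.2.2.1 main.2.2.2.1
      main.2.2.2.2.1 main.2.2.2.2.2 hp a12 a23 a13 b11 b12 b22 b23 b33 b31
      n13 n21 n32 m12 m13 m23
end
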